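/- arXiv:1602.01613 — 6 statements merged into one kernel-verified Lean document; each statement's English description precedes it below -/
import Mathlib

section
/- Suppose additionally that W(t₀) = 0 almost surely for some t₀ ∈ ℝ. Let Γ be a Borel measurable, positive functional on D that is invariant under addition of constant functions, i.e., Γ(f + a) = Γ(f) for every f ∈ D and every constant a ∈ ℝ. Then, provided the expectations below exist, for every t ∈ ℝ one has E[e^{W(t₀ + t)} Γ(W)] = E[Γ(θ_t W)], where θ_t is the shift operator, (θ_t W)(s) = W(s − t). -/
open MeasureTheory Filter Set ProbabilityTheory
open scoped ENNReal NNReal Topology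

noncomputable section

/-- The grid `δℤ ⊆ ℝ`, with the convention `δℤ = ℝ` when `δ = 0`. -/
def grid (δ : ℝ) : Set ℝ := if δ = 0 then Set.univ else {t : ℝ | ∃ n : ℤ, t = δ * n}

/-- A function `f : ℝ → ℝ` is càdlàg: right-continuous with left limits. -/
def Cadlag (f : ℝ → ℝ) : Prop :=
  ∀ t : ℝ, ContinuousWithinAt f (Set.Ici t) t ∧ ∃ l : ℝ, Tendsto f (𝓝[<] t) (𝓝 l)

/-- `e^{W(t)}` as an extended nonnegative real. -/
def expW {Ω : Type*} (W : Ω → ℝ → ℝ) (ω : Ω) (t : ℝ) : ℝ≥0∞ :=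
  ENNReal.ofReal (Real.exp (W ω t))

/-- `M^δ = sup_{t ∈ δℤ} e^{W(t)}`. -/
def Msup {Ω : Type*} (W : Ω → ℝ → ℝ) (δ : ℝ) (ω : Ω) : ℝ≥0∞ :=
  ⨆ t ∈ grid δ, expW W ω t

/-- `S^η = η ∑_{t ∈ ηℤ} e^{W(t)}` for `η > 0`, and `S^0 = ∫_ℝ e^{W(t)} dt`. -/
def Ssum {Ω : Type*} (W : Ω → ℝ → ℝ) (η : ℝ) (ω : Ω) : ℝ≥0∞ :=
  if η = 0 then ∫⁻ t : ℝ, expW W ω t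
  else ENNReal.ofReal η * ∑' n : ℤ, expW W ω (η * n)

/-- `E[sup_{t ∈ δℤ ∩ [0,T]} e^{W(t)}]`, the quantity whose linear growth rate in `T`
is the generalized Pickands constant `H_W^δ`. -/
def picksum {Ω : Type*} [MeasurableSpace Ω] (P : Measure Ω) (W : Ω → ℝ → ℝ)
    (δ T : ℝ) : ℝ≥0∞ :=
  ∫⁻ ω, ⨆ t ∈ grid δ ∩ Set.Icc 0 T, expW W ω t ∂P

/-- Stationarity of the Brown–Resnick process `ξ_W` built from `W`, expressed through the
equivalent characterization that the Poisson point processes `{Uᵢ + Wᵢ}` and `{Uᵢ + θ_h Wᵢ}`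
on path space have the same intensity measure: for every `h ∈ ℝ` and Borel `A ⊆ D`,
`∫ e^{-u} P(u + W ∈ A) du = ∫ e^{-u} P(u + θ_h W ∈ A) du`, where `θ_h W (s) = W(s - h)`. -/
def BRStationary {Ω : Type*} [MeasurableSpace Ω] (P : Measure Ω) (W : Ω → ℝ → ℝ) : Prop :=
  ∀ (h : ℝ) (A : Set (ℝ → ℝ)), MeasurableSet A →
    (∫⁻ u : ℝ, ENNReal.ofReal (Real.exp (-u)) * P {ω | (fun s => u + W ω s) ∈ A}) =
    (∫⁻ u : ℝ, ENNReal.ofReal (Real.exp (-u)) * P {ω | (fun s => u + W ω (s - h)) ∈ A})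

/-!
Apply stationarity to the path set `A = {f | f (t₀ + t) ∈ [0, 1]} ∩ B`, where `B` is invariant under
adding constants. Integrating out the Poisson level `u` (Tonelli and translation invariance of
Lebesgue measure), the left side becomes `c · E[e^{W(t₀ + t)}; W ∈ B]` and, because
`(θ_t W)(t₀ + t) = W(t₀) = 0` a.s., the right side becomes `c · P(θ_t W ∈ B)`, with
`c = ∫₀¹ e^{-u} du ∈ (0, ∞)`. The superlevel sets `{Γ > a}` are such sets `B`, so the layer-cake
formula for `Γ` under `e^{W(t₀ + t)} dP` and under `dP` gives the identity.
-/

open Real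

theorem lintegral_exp_neg_Icc_ne_zero : ∫⁻ u in Icc (0 : ℝ) 1, ENNReal.ofReal (exp (-u)) ≠ 0 := by
  refine (setLIntegral_pos_iff (by fun_prop)).2 ?_ |>.ne'
  simp [Function.support, exp_pos]

theorem lintegral_exp_neg_Icc_ne_top : ∫⁻ u in Icc (0 : ℝ) 1, ENNReal.ofReal (exp (-u)) ≠ ⊤ :=
  (setLIntegral_lt_top_of_isCompact (by simp) isCompact_Icc
    (f := fun u => Real.toNNReal (exp (-u))) (by fun_prop)).ne

theorem lintegral_exp_neg_mul_indicator_Icc_add (x : ℝ) :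
    ∫⁻ u, ENNReal.ofReal (exp (-u)) * (Icc (0 : ℝ) 1).indicator 1 (u + x) =
      ENNReal.ofReal (exp x) * ∫⁻ u in Icc (0 : ℝ) 1, ENNReal.ofReal (exp (-u)) := by
  have h := lintegral_add_right_eq_self (μ := volume)
    (fun v => ENNReal.ofReal (exp (-(v - x))) * (Icc (0 : ℝ) 1).indicator 1 v) x
  simp only [add_sub_cancel_right] at h
  rw [h, ← lintegral_indicator measurableSet_Icc, ← lintegral_const_mul' _ _ ENNReal.ofReal_ne_top]
  refine lintegral_congr fun v => ?_
  by_cases hv : v ∈ Icc (0 : ℝ) 1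
  · simp [hv, ← ENNReal.ofReal_mul (exp_pos _).le, ← exp_add, sub_eq_add_neg]
  · simp [hv]

theorem lintegral_exp_neg_mul_measure_inter_add_mem_Icc {Ω : Type*} [MeasurableSpace Ω]
    (μ : Measure Ω) [SFinite μ] {X : Ω → ℝ} (hX : Measurable X) (S : Set Ω) :
    ∫⁻ u, ENNReal.ofReal (exp (-u)) * μ (S ∩ {ω | u + X ω ∈ Icc 0 1}) =
      (∫⁻ u in Icc (0 : ℝ) 1, ENNReal.ofReal (exp (-u))) *
        ∫⁻ ω in S, ENNReal.ofReal (exp (X ω)) ∂μ := by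
  have hμ (u : ℝ) : μ (S ∩ {ω | u + X ω ∈ Icc 0 1}) =
      ∫⁻ ω in S, (Icc (0 : ℝ) 1).indicator 1 (u + X ω) ∂μ := by
    have hmeas : MeasurableSet {ω | u + X ω ∈ Icc (0 : ℝ) 1} :=
      (measurable_const.add hX) measurableSet_Icc
    rw [inter_comm, ← Measure.restrict_apply hmeas, ← lintegral_indicator_one hmeas]
    rfl
  have huncurry : Measurable (Function.uncurry fun (u : ℝ) (ω : Ω) =>
      ENNReal.ofReal (exp (-u)) * (Icc (0 : ℝ) 1).indicator 1 (u + X ω)) :=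
    (by fun_prop : Measurable fun p : ℝ × Ω => ENNReal.ofReal (exp (-p.1))).mul
      ((measurable_const.indicator measurableSet_Icc).comp
        (measurable_fst.add (hX.comp measurable_snd)))
  calc ∫⁻ u, ENNReal.ofReal (exp (-u)) * μ (S ∩ {ω | u + X ω ∈ Icc 0 1})
      = ∫⁻ u, ∫⁻ ω in S,
          ENNReal.ofReal (exp (-u)) * (Icc (0 : ℝ) 1).indicator 1 (u + X ω) ∂μ := by
        simp_rw [hμ, lintegral_const_mul' _ _ ENNReal.ofReal_ne_top]
    _ = ∫⁻ ω in S,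
          (∫⁻ u, ENNReal.ofReal (exp (-u)) * (Icc (0 : ℝ) 1).indicator 1 (u + X ω)) ∂μ :=
        lintegral_lintegral_swap huncurry.aemeasurable
    _ = _ := by
        simp_rw [lintegral_exp_neg_mul_indicator_Icc_add]
        rw [lintegral_mul_const _ (by fun_prop), mul_comm]

theorem withDensity_expW_preimage_eq_shift_preimage {Ω : Type*} [MeasurableSpace Ω]
    {P : Measure Ω} [SFinite P] {W : Ω → ℝ → ℝ} (hWmeas : Measurable W)
    (hstat : BRStationary P W) {t₀ : ℝ} (ht₀ : ∀ᵐ ω ∂P, W ω t₀ = 0) (t : ℝ)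
    {B : Set (ℝ → ℝ)} (hB : MeasurableSet B)
    (hBinv : ∀ (f : ℝ → ℝ) (a : ℝ), (fun s => a + f s) ∈ B ↔ f ∈ B) :
    P.withDensity (fun ω => expW W ω (t₀ + t)) (W ⁻¹' B) =
      P {ω | (fun s => W ω (s - t)) ∈ B} := by
  set A : Set (ℝ → ℝ) := {f | f (t₀ + t) ∈ Icc 0 1} ∩ B
  have hA : MeasurableSet A := (measurable_pi_apply _ measurableSet_Icc).inter hB
  have hL (u : ℝ) : {ω | (fun s => u + W ω s) ∈ A} =
      W ⁻¹' B ∩ {ω | u + W ω (t₀ + t) ∈ Icc 0 1} := by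
    ext ω; simp [A, hBinv, and_comm]
  have hR (u : ℝ) : {ω | (fun s => u + W ω (s - t)) ∈ A} =
      {ω | (fun s => W ω (s - t)) ∈ B} ∩ {ω | u + W ω (t₀ + t - t) ∈ Icc 0 1} := by
    ext ω; simp [A, hBinv (fun s => W ω (s - t)), and_comm]
  have h := hstat t A hA
  simp_rw [hL, hR] at h
  rw [lintegral_exp_neg_mul_measure_inter_add_mem_Icc P (by fun_prop),
    lintegral_exp_neg_mul_measure_inter_add_mem_Icc P (by fun_prop),
    ENNReal.mul_right_inj lintegral_exp_neg_Icc_ne_zero lintegral_exp_neg_Icc_ne_top] at h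
  rw [withDensity_apply _ (hWmeas hB), ← setLIntegral_one]
  refine h.trans (lintegral_congr_ae (ae_restrict_of_ae ?_))
  filter_upwards [ht₀] with ω hω
  simp [hω]

theorem generalized_pickands_shift_identity_general
    {Ω : Type*} [MeasurableSpace Ω] (P : Measure Ω) [IsProbabilityMeasure P]
    (W : Ω → ℝ → ℝ) (hWmeas : Measurable W)
    (hstat : BRStationary P W)
    (t₀ : ℝ) (ht₀ : ∀ᵐ ω ∂P, W ω t₀ = 0)
    (Γ : (ℝ → ℝ) → ℝ) (hΓmeas : Measurable Γ)
    (hΓpos : ∀ f : ℝ → ℝ, 0 < Γ f)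
    (hΓinv : ∀ (f : ℝ → ℝ) (a : ℝ), Γ (fun s => f s + a) = Γ f)
    (t : ℝ) :
    ∫ ω, Real.exp (W ω (t₀ + t)) * Γ (W ω) ∂P
      = ∫ ω, Γ (fun s => W ω (s - t)) ∂P := by
  have hΓW : Measurable fun ω => Γ (W ω) := hΓmeas.comp hWmeas
  have hΓθW : Measurable fun ω => Γ (fun s => W ω (s - t)) := hΓmeas.comp (by fun_prop)
  rw [integral_eq_lintegral_of_nonneg_ae
      (ae_of_all _ fun ω => mul_nonneg (exp_pos _).le (hΓpos _).le)
      (by fun_prop : Measurable _).aestronglyMeasurable,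
    integral_eq_lintegral_of_nonneg_ae (ae_of_all _ fun ω => (hΓpos _).le)
      hΓθW.aestronglyMeasurable]
  congr 1
  calc ∫⁻ ω, ENNReal.ofReal (exp (W ω (t₀ + t)) * Γ (W ω)) ∂P
      = ∫⁻ ω, ENNReal.ofReal (Γ (W ω)) ∂P.withDensity fun ω => expW W ω (t₀ + t) := by
        rw [lintegral_withDensity_eq_lintegral_mul _ (by unfold expW; fun_prop) (by fun_prop)]
        simp [expW, ENNReal.ofReal_mul (exp_pos _).le]
    _ = ∫⁻ a in Ioi 0, P.withDensity (fun ω => expW W ω (t₀ + t)) {ω | a < Γ (W ω)} :=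
        lintegral_eq_lintegral_meas_lt _ (ae_of_all _ fun ω => (hΓpos _).le) hΓW.aemeasurable
    _ = ∫⁻ a in Ioi 0, P {ω | a < Γ (fun s => W ω (s - t))} := by
        refine lintegral_congr fun a => ?_
        refine withDensity_expW_preimage_eq_shift_preimage hWmeas hstat ht₀ t
          (hΓmeas measurableSet_Ioi) fun f b => ?_
        simp [add_comm b, hΓinv]
    _ = ∫⁻ ω, ENNReal.ofReal (Γ (fun s => W ω (s - t))) ∂P :=
        (lintegral_eq_lintegral_meas_lt _ (ae_of_all _ fun ω => (hΓpos _).le)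
          hΓθW.aemeasurable).symm

/-- **Lemma 1 (Dȩbicki–Engelke–Hashorva).**
Let `W` be a càdlàg process with `W 0 = 0` a.s. and `E e^{W(t)} = 1` for all `t`, such that the
associated Brown–Resnick process `ξ_W` is max-stable and stationary.  Suppose moreover that
`W t₀ = 0` a.s. for some `t₀ ∈ ℝ`.  If `Γ` is a Borel measurable, positive functional on the
path space that is invariant under addition of constant functions then, provided the
expectations below exist,
`E[e^{W(t₀ + t)} Γ(W)] = E[Γ(θ_t W)]` for every `t ∈ ℝ`, where `θ_t W (s) = W (s - t)`. -/
theorem generalized_pickands_shift_identity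
    {Ω : Type*} [MeasurableSpace Ω] (P : Measure Ω) [IsProbabilityMeasure P]
    (W : Ω → ℝ → ℝ) (hWmeas : Measurable W)
    (hpath : ∀ ω, Cadlag (W ω))
    (hW0 : ∀ᵐ ω ∂P, W ω 0 = 0)
    (hmarg : ∀ t : ℝ, ∫⁻ ω, expW W ω t ∂P = 1)
    (hstat : BRStationary P W)
    (t₀ : ℝ) (ht₀ : ∀ᵐ ω ∂P, W ω t₀ = 0)
    (Γ : (ℝ → ℝ) → ℝ) (hΓmeas : Measurable Γ)
    (hΓpos : ∀ f : ℝ → ℝ, 0 < Γ f)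
    (hΓinv : ∀ (f : ℝ → ℝ) (a : ℝ), Γ (fun s => f s + a) = Γ f)
    (t : ℝ)
    (hint₁ : Integrable (fun ω => Real.exp (W ω (t₀ + t)) * Γ (W ω)) P)
    (hint₂ : Integrable (fun ω => Γ (fun s => W ω (s - t))) P) :
    ∫ ω, Real.exp (W ω (t₀ + t)) * Γ (W ω) ∂P
      = ∫ ω, Γ (fun s => W ω (s - t)) ∂P :=
  generalized_pickands_shift_identity_general P W hWmeas hstat t₀ ht₀ Γ hΓmeas hΓpos hΓinv t
end
end

section
/- Let δ > 0. If ξ_W^δ possesses an M3 representation and P(S^δ < ∞) = 1, then the generalized Pickands constant coincides with the M3 constant: H_W^δ = C_W^δ > 0. -/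
/-!
Apply the M3 representation to the lattice points `0, δ, …, Nδ` of `[0, T]`, `N = ⌊T/δ⌋`:
`E[max_{i ≤ N} e^{W(δi)}] = C · E[δ ∑_m max_{i ≤ N} e^{F(δ(i - m))}]`. As `F ≤ 0` on `δℤ` and
`F(0) = 0`, each shift `m ∈ [0, N]` contributes exactly `1`, each `m` within distance `K` of that
window at most `1`, and every other `m` at most `∑_i e^{F(δ(i - m))}` with `|i - m| > K`. This gives
`C δ (N + 1) ≤ E[sup] ≤ C δ ((N + 1)(1 + τ_K) + 2K)` with `τ_K = ∑_{|j| > K} E e^{F(δj)}`, and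
`τ_K → 0` because `C⁻¹ = δ ∑_j E e^{F(δj)}` is finite. Since `δ (N + 1) ~ T`, the ratio tends
to `C`.
-/

open MeasureTheory Filter Set ProbabilityTheory
open scoped ENNReal NNReal Topology

noncomputable section

/-- The measure `ν_δ` on `ℝ`: `δ` times the counting measure on `δℤ` for `δ > 0`, and the
Lebesgue measure for `δ = 0`. -/
def latticeMeasure (δ : ℝ) : Measure ℝ :=
  if δ = 0 then volume
  else ENNReal.ofReal δ • Measure.sum (fun n : ℤ => Measure.dirac (δ * n))

/-- `ξ_W^δ` (the Brown–Resnick process associated with `W`, restricted to `δℤ`, or `ξ_W`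
itself for `δ = 0`) admits a mixed moving maxima (M3) representation with shape process `F`
(defined on a probability space `Ω'` with law `P'`) and constant `C = C_W^δ`.
This is encoded through: `F` is measurable (and càdlàg when `δ = 0`) with
`sup_{t ∈ δℤ} F(t) = F(0) = 0` a.s.; `C = (E ∫ e^{F(t)} ν_δ(dt))⁻¹ ∈ (0,∞)`; and the
finite-dimensional distributions of `ξ_W^δ`, expressed through exponent measures, match those
of the M3 process: for all `t₁,…,tₙ ∈ δℤ` and `x₁,…,xₙ ∈ ℝ`,
`E[max_j e^{W(t_j) - x_j}] = C · E[∫ max_j e^{F(t_j - r) - x_j} ν_δ(dr)]`. -/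
def M3Rep {Ω Ω' : Type*} [MeasurableSpace Ω] [MeasurableSpace Ω']
    (P : Measure Ω) (P' : Measure Ω') (W : Ω → ℝ → ℝ) (F : Ω' → ℝ → ℝ)
    (δ : ℝ) (C : ℝ≥0∞) : Prop :=
  Measurable F ∧
  (δ = 0 → ∀ ω', Cadlag (F ω')) ∧
  (∀ᵐ ω' ∂P', F ω' 0 = 0 ∧ ∀ t ∈ grid δ, F ω' t ≤ 0) ∧
  C = (∫⁻ ω', ∫⁻ t, ENNReal.ofReal (Real.exp (F ω' t)) ∂(latticeMeasure δ) ∂P')⁻¹ ∧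
  0 < C ∧ C < ⊤ ∧
  (∀ (n : ℕ) (t x : Fin n → ℝ), (∀ i, t i ∈ grid δ) →
    (∫⁻ ω, ⨆ i, ENNReal.ofReal (Real.exp (W ω (t i) - x i)) ∂P) =
      C * ∫⁻ ω', ∫⁻ r, ⨆ i, ENNReal.ofReal (Real.exp (F ω' (t i - r) - x i))
        ∂(latticeMeasure δ) ∂P')

theorem natCast_add_one_le_tsum_iSup_sub {g : ℤ → ℝ≥0∞} (hg : 1 ≤ g 0) (N : ℕ) :
    (N : ℝ≥0∞) + 1 ≤ ∑' m : ℤ, ⨆ i : Fin (N + 1), g ((i : ℕ) - m) :=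
  calc (N : ℝ≥0∞) + 1 = ∑ _m ∈ Finset.range (N + 1), (1 : ℝ≥0∞) := by simp
    _ ≤ ∑ m ∈ Finset.range (N + 1), ⨆ i : Fin (N + 1), g ((i : ℕ) - (m : ℤ)) := by
      gcongr with m hm
      exact hg.trans (le_iSup_of_le ⟨m, Finset.mem_range.mp hm⟩ (by simp))
    _ ≤ ∑' m : ℕ, ⨆ i : Fin (N + 1), g ((i : ℕ) - (m : ℤ)) := ENNReal.sum_le_tsum _
    _ ≤ ∑' m : ℤ, ⨆ i : Fin (N + 1), g ((i : ℕ) - m) :=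
      ENNReal.tsum_comp_le_tsum_of_injective Nat.cast_injective
        (fun m : ℤ => ⨆ i : Fin (N + 1), g ((i : ℕ) - m))

theorem tsum_iSup_sub_le {g : ℤ → ℝ≥0∞} (hg : ∀ j, g j ≤ 1) (N K : ℕ) :
    ∑' m : ℤ, ⨆ i : Fin (N + 1), g ((i : ℕ) - m) ≤
      (N + 2 * K + 1 : ℝ≥0∞) + (N + 1) * ∑' j : {j : ℤ | K < j.natAbs}, g j := by
  set A := {j : ℤ | K < j.natAbs}
  set s := Finset.Icc (-(K : ℤ)) (N + K)
  have hpt : ∀ m : ℤ, ⨆ i : Fin (N + 1), g ((i : ℕ) - m) ≤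
      (s : Set ℤ).indicator 1 m + ∑ i : Fin (N + 1), A.indicator g ((i : ℕ) - m) := by
    intro m
    by_cases hm : m ∈ s
    · rw [indicator_of_mem (Finset.mem_coe.mpr hm), Pi.one_apply]
      exact (iSup_le fun i => hg _).trans le_self_add
    · rw [indicator_of_notMem (by simpa using hm), zero_add]
      refine iSup_le fun i => ?_
      have hA : ((i : ℕ) - m : ℤ) ∈ A := by
        simp only [s, Finset.mem_Icc, not_and_or, not_le] at hm
        simp only [A, mem_ofPred_eq]
        omega
      rw [← indicator_of_mem hA g]
      exact Finset.single_le_sum (f := fun i : Fin (N + 1) => A.indicator g ((i : ℕ) - m))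
        (fun _ _ => zero_le) (Finset.mem_univ i)
  have hcard : ∑' m : ℤ, (s : Set ℤ).indicator 1 m = (N + 2 * K + 1 : ℝ≥0∞) := by
    rw [← tsum_subtype]
    refine (Finset.tsum_subtype s 1).trans ?_
    rw [Pi.one_def, Finset.sum_const, Int.card_Icc, nsmul_one]
    have : ((N : ℤ) + K + 1 - -K).toNat = N + 2 * K + 1 := by omega
    rw [this]; push_cast; ring
  have hshift : ∑' m : ℤ, ∑ i : Fin (N + 1), A.indicator g ((i : ℕ) - m) =
      (N + 1) * ∑' j : A, g j := by
    rw [Summable.tsum_finsetSum (fun _ _ => ENNReal.summable), tsum_subtype]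
    have := fun i : Fin (N + 1) => (Equiv.subLeft ((i : ℕ) : ℤ)).tsum_eq (A.indicator g)
    simp only [Equiv.subLeft_apply] at this
    simp [this]
  calc _ ≤ ∑' m : ℤ, ((s : Set ℤ).indicator 1 m +
          ∑ i : Fin (N + 1), A.indicator g ((i : ℕ) - m)) := ENNReal.tsum_le_tsum hpt
    _ = _ := by rw [ENNReal.tsum_add, hcard, hshift]

theorem tendsto_tsum_natAbs_gt_atTop_zero {g : ℤ → ℝ≥0∞} (hg : ∑' j, g j ≠ ∞) :
    Tendsto (fun K : ℕ => ∑' j : {j : ℤ | K < j.natAbs}, g j) atTop (𝓝 0) := by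
  have hIcc : Tendsto (fun K : ℕ => Finset.Icc (-(K : ℤ)) K) atTop atTop :=
    tendsto_atTop_finset_of_monotone
      (fun a b hab => Finset.Icc_subset_Icc (by omega) (by omega))
      (fun j => ⟨j.natAbs, by simp only [Finset.mem_Icc]; omega⟩)
  refine ((ENNReal.tendsto_tsum_compl_atTop_zero hg).comp hIcc).congr fun K => ?_
  exact Equiv.tsum_eq (Equiv.subtypeEquivRight fun j => by
    simp only [Finset.mem_Icc, mem_ofPred_eq]; omega) (fun j : {j : ℤ | K < j.natAbs} => g j)

theorem ENNReal.tendsto_div_ofReal_atTop_of_linear_bounds {f : ℝ → ℝ≥0∞} {c : ℝ≥0∞}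
    (hlow : ∀ᶠ T in atTop, c * ENNReal.ofReal T ≤ f T)
    (hup : ∀ c' > c, ∃ b ≠ ∞, ∀ᶠ T in atTop, f T ≤ c' * ENNReal.ofReal T + b) :
    Tendsto (fun T => f T / ENNReal.ofReal T) atTop (𝓝 c) := by
  refine tendsto_order.2 ⟨fun a ha => ?_, fun a ha => ?_⟩
  · filter_upwards [hlow, eventually_gt_atTop 0] with T hT hT0
    exact ha.trans_le ((ENNReal.le_div_iff_mul_le (Or.inl (by simpa using hT0))
      (Or.inl ENNReal.ofReal_ne_top)).2 hT)
  · obtain ⟨c', hc, hc'a⟩ := exists_between ha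
    obtain ⟨b, hb, hfb⟩ := hup c' hc
    have hlim : Tendsto (fun T => c' + b * (ENNReal.ofReal T)⁻¹) atTop (𝓝 (c' + b * 0)) :=
      tendsto_const_nhds.add (ENNReal.Tendsto.const_mul
        (ENNReal.inv_top ▸ tendsto_inv_iff.2 ENNReal.tendsto_ofReal_atTop) (Or.inr hb))
    rw [mul_zero, add_zero] at hlim
    filter_upwards [hfb, hlim.eventually (gt_mem_nhds hc'a), eventually_gt_atTop 0]
      with T hT hlt hT0
    calc f T / ENNReal.ofReal T ≤ (c' * ENNReal.ofReal T + b) / ENNReal.ofReal T := by gcongr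
      _ = c' + b * (ENNReal.ofReal T)⁻¹ := by
        rw [ENNReal.add_div, ENNReal.mul_div_cancel_right (by simpa using hT0)
          ENNReal.ofReal_ne_top, div_eq_mul_inv]
      _ < a := hlt

theorem mem_grid_iff {δ : ℝ} (hδ : δ ≠ 0) {t : ℝ} : t ∈ grid δ ↔ ∃ n : ℤ, t = δ * n := by
  simp [grid, hδ]

theorem lintegral_latticeMeasure {δ : ℝ} (hδ : δ ≠ 0) (f : ℝ → ℝ≥0∞) :
    ∫⁻ t, f t ∂latticeMeasure δ = ENNReal.ofReal δ * ∑' n : ℤ, f (δ * n) := by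
  simp [latticeMeasure, hδ, lintegral_sum_measure, lintegral_smul_measure]

theorem iSup_grid_inter_Icc {δ T : ℝ} (hδ : 0 < δ) (hT : 0 ≤ T) (g : ℝ → ℝ≥0∞) :
    ⨆ t ∈ grid δ ∩ Icc 0 T, g t = ⨆ i : Fin (⌊T / δ⌋₊ + 1), g (δ * (i : ℕ)) := by
  refine le_antisymm (iSup₂_le fun t ⟨ht, ht0, htT⟩ => ?_) (iSup_le fun i => ?_)
  · obtain ⟨n, rfl⟩ := (mem_grid_iff hδ.ne').1 ht
    lift n to ℕ using (by exact_mod_cast (mul_nonneg_iff_of_pos_left hδ).1 ht0)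
    have hn : n ≤ ⌊T / δ⌋₊ := Nat.le_floor ((le_div_iff₀ hδ).2 (by push_cast at htT; linarith))
    exact le_iSup_of_le (⟨n, Nat.lt_succ_of_le hn⟩ : Fin (⌊T / δ⌋₊ + 1)) (by simp)
  · have hi : ((i : ℕ) : ℝ) ≤ T / δ :=
      (Nat.cast_le.2 (Nat.lt_succ_iff.1 i.2)).trans (Nat.floor_le (div_nonneg hT hδ.le))
    refine le_biSup g ⟨(mem_grid_iff hδ.ne').2 ⟨i, by push_cast; rfl⟩, by positivity, ?_⟩
    linarith [(le_div_iff₀ hδ).1 hi]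

theorem ofReal_le_ofReal_mul_floor_add_one {δ : ℝ} (hδ : 0 < δ) (T : ℝ) :
    ENNReal.ofReal T ≤ ENNReal.ofReal δ * (⌊T / δ⌋₊ + 1) := by
  rw [← ENNReal.ofReal_natCast, ← ENNReal.ofReal_one, ← ENNReal.ofReal_add (by positivity)
    zero_le_one, ← ENNReal.ofReal_mul hδ.le]
  refine ENNReal.ofReal_le_ofReal ?_
  linarith [(div_lt_iff₀ hδ).1 (Nat.lt_floor_add_one (T / δ))]

theorem ofReal_mul_floor_add_one_le {δ T : ℝ} (hδ : 0 < δ) (hT : 0 ≤ T) :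
    ENNReal.ofReal δ * (⌊T / δ⌋₊ + 1) ≤ ENNReal.ofReal (T + δ) := by
  rw [← ENNReal.ofReal_natCast, ← ENNReal.ofReal_one, ← ENNReal.ofReal_add (by positivity)
    zero_le_one, ← ENNReal.ofReal_mul hδ.le]
  refine ENNReal.ofReal_le_ofReal ?_
  linarith [(le_div_iff₀ hδ).1 (Nat.floor_le (div_nonneg hT hδ.le))]

theorem measurable_expW {Ω : Type*} [MeasurableSpace Ω] {W : Ω → ℝ → ℝ} (hW : Measurable W)
    (t : ℝ) : Measurable fun ω => expW W ω t := by
  unfold expW; fun_prop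

namespace M3Rep

variable {Ω Ω' : Type*} [MeasurableSpace Ω] [MeasurableSpace Ω'] {P : Measure Ω}
  {P' : Measure Ω'} {W : Ω → ℝ → ℝ} {F : Ω' → ℝ → ℝ} {δ : ℝ} {C : ℝ≥0∞}

theorem tsum_lintegral_expW_ne_top (h : M3Rep P P' W F δ C) (hδ : 0 < δ) :
    ∑' j : ℤ, ∫⁻ ω', expW F ω' (δ * j) ∂P' ≠ ∞ := by
  obtain ⟨hF, -, -, hC, hCpos, -⟩ := h
  have hinner : ∫⁻ ω', ∫⁻ t, ENNReal.ofReal (Real.exp (F ω' t)) ∂latticeMeasure δ ∂P' =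
      ENNReal.ofReal δ * ∑' j : ℤ, ∫⁻ ω', expW F ω' (δ * j) ∂P' := by
    simp_rw [lintegral_latticeMeasure hδ.ne']
    rw [lintegral_const_mul' _ _ ENNReal.ofReal_ne_top]
    exact congrArg _ (lintegral_tsum fun j => (measurable_expW hF (δ * j)).aemeasurable)
  intro htop
  rw [hinner, htop, ENNReal.mul_top (ENNReal.ofReal_pos.2 hδ).ne', ENNReal.inv_top] at hC
  exact hCpos.ne' hC

theorem picksum_eq (h : M3Rep P P' W F δ C) (hδ : 0 < δ) {T : ℝ} (hT : 0 ≤ T) :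
    picksum P W δ T = C * ∫⁻ ω', ENNReal.ofReal δ *
      ∑' m : ℤ, ⨆ i : Fin (⌊T / δ⌋₊ + 1), expW F ω' (δ * ((i : ℕ) - m : ℤ)) ∂P' := by
  have hfdd := h.2.2.2.2.2.2 (⌊T / δ⌋₊ + 1) (fun i => δ * (i : ℕ)) 0
    fun i => (mem_grid_iff hδ.ne').2 ⟨i, by push_cast; rfl⟩
  simp only [Pi.zero_apply, sub_zero] at hfdd
  simp only [picksum, iSup_grid_inter_Icc hδ hT]
  refine hfdd.trans (congrArg _ (lintegral_congr fun ω' => ?_))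
  rw [lintegral_latticeMeasure hδ.ne']
  push_cast
  simp only [mul_sub]
  rfl

theorem mul_ofReal_le_picksum [IsProbabilityMeasure P'] (h : M3Rep P P' W F δ C) (hδ : 0 < δ)
    {T : ℝ} (hT : 0 ≤ T) : C * ENNReal.ofReal T ≤ picksum P W δ T := by
  rw [h.picksum_eq hδ hT]
  gcongr
  calc ENNReal.ofReal T ≤ ENNReal.ofReal δ * (⌊T / δ⌋₊ + 1) :=
        ofReal_le_ofReal_mul_floor_add_one hδ T
    _ = ∫⁻ _, ENNReal.ofReal δ * (⌊T / δ⌋₊ + 1) ∂P' := by simp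
    _ ≤ _ := lintegral_mono_ae <| h.2.2.1.mono fun ω' hω' => by
      gcongr
      exact natCast_add_one_le_tsum_iSup_sub (g := fun j : ℤ => expW F ω' (δ * j))
        (by simp [expW, hω'.1]) _

theorem picksum_le [IsProbabilityMeasure P'] (h : M3Rep P P' W F δ C) (hδ : 0 < δ)
    {T : ℝ} (hT : 0 ≤ T) (K : ℕ) :
    picksum P W δ T ≤
      C * (1 + ∑' j : {j : ℤ | K < j.natAbs}, ∫⁻ ω', expW F ω' (δ * j) ∂P') * ENNReal.ofReal T +
      C * ((1 + ∑' j : {j : ℤ | K < j.natAbs}, ∫⁻ ω', expW F ω' (δ * j) ∂P' + 2 * K) *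
        ENNReal.ofReal δ) := by
  set N := ⌊T / δ⌋₊
  set τ := ∑' j : {j : ℤ | K < j.natAbs}, ∫⁻ ω', expW F ω' (δ * j) ∂P'
  have hpt : ∀ᵐ ω' ∂P', ENNReal.ofReal δ *
      ∑' m : ℤ, ⨆ i : Fin (N + 1), expW F ω' (δ * ((i : ℕ) - m : ℤ)) ≤
      ENNReal.ofReal δ * (N + 2 * K + 1) + ENNReal.ofReal δ * (N + 1) *
        ∑' j : {j : ℤ | K < j.natAbs}, expW F ω' (δ * j) := h.2.2.1.mono fun ω' hω' => by
    rw [mul_assoc, ← mul_add]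
    gcongr
    refine tsum_iSup_sub_le (g := fun j : ℤ => expW F ω' (δ * j)) (fun j => ?_) N K
    exact ENNReal.ofReal_le_one.2 (Real.exp_le_one_iff.2
      (hω'.2 _ ((mem_grid_iff hδ.ne').2 ⟨j, rfl⟩)))
  have hint : ∫⁻ ω', ∑' j : {j : ℤ | K < j.natAbs}, expW F ω' (δ * j) ∂P' = τ :=
    lintegral_tsum fun j => (measurable_expW h.1 _).aemeasurable
  rw [h.picksum_eq hδ hT]
  calc C * ∫⁻ ω', _ ∂P'
      ≤ C * (ENNReal.ofReal δ * (N + 2 * K + 1) + ENNReal.ofReal δ * (N + 1) * τ) := by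
        gcongr
        refine (lintegral_mono_ae hpt).trans_eq ?_
        rw [lintegral_add_left measurable_const, lintegral_const, measure_univ, mul_one,
          lintegral_const_mul' _ _ (by finiteness), hint]
    _ = C * ((1 + τ) * (ENNReal.ofReal δ * (N + 1)) + 2 * K * ENNReal.ofReal δ) := by ring
    _ ≤ C * ((1 + τ) * ENNReal.ofReal (T + δ) + 2 * K * ENNReal.ofReal δ) := by
        gcongr
        exact ofReal_mul_floor_add_one_le hδ hT
    _ = _ := by rw [ENNReal.ofReal_add hT hδ.le]; ring

end M3Rep

theorem pickands_eq_m3_constant_general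
    {Ω : Type*} [MeasurableSpace Ω] (P : Measure Ω)
    (W : Ω → ℝ → ℝ)
    (δ : ℝ) (hδ : 0 < δ)
    {Ω' : Type*} [MeasurableSpace Ω'] (P' : Measure Ω') [IsProbabilityMeasure P']
    (F : Ω' → ℝ → ℝ) (C : ℝ≥0∞)
    (hM3 : M3Rep P P' W F δ C) :
    Tendsto (fun T : ℝ => picksum P W δ T / ENNReal.ofReal T) atTop (𝓝 C) ∧ 0 < C := by
  have ⟨_, _, _, _, hCpos, hCtop, _⟩ := hM3
  have hτ := tendsto_tsum_natAbs_gt_atTop_zero (hM3.tsum_lintegral_expW_ne_top hδ)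
  refine ⟨ENNReal.tendsto_div_ofReal_atTop_of_linear_bounds ?_ fun c' hc' => ?_, hCpos⟩
  · filter_upwards [eventually_ge_atTop 0] with T hT using hM3.mul_ofReal_le_picksum hδ hT
  · have hlim := ENNReal.Tendsto.const_mul ((tendsto_const_nhds (x := (1 : ℝ≥0∞))).add hτ)
      (Or.inr hCtop.ne)
    rw [add_zero, mul_one] at hlim
    obtain ⟨K, hKc, hK1⟩ :=
      ((hlim.eventually (gt_mem_nhds hc')).and (hτ.eventually (gt_mem_nhds zero_lt_one))).exists
    refine ⟨_, ?_, (eventually_ge_atTop 0).mono fun T hT =>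
      (hM3.picksum_le hδ hT K).trans (add_le_add_left (mul_le_mul_left hKc.le _) _)⟩
    have := hCtop.ne
    have := hK1.ne_top
    finiteness

/-- **Corollary to Theorems 1 and 4 (Dȩbicki–Engelke–Hashorva).**
Let `W` be such that the corresponding max-stable Brown–Resnick process `ξ_W` is stationary and
has càdlàg paths, and let `δ > 0`.  If `ξ_W^δ` possesses an M3 representation (with shape
process `F` and constant `C = C_W^δ`) and `P(S^δ < ∞) = 1`, then the generalized Pickands
constant coincides with the M3 constant: `H_W^δ = C_W^δ > 0`. -/
theorem pickands_eq_m3_constant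
    {Ω : Type*} [MeasurableSpace Ω] (P : Measure Ω) [IsProbabilityMeasure P]
    (W : Ω → ℝ → ℝ) (hWmeas : Measurable W)
    (hpath : ∀ ω, Cadlag (W ω))
    (hW0 : ∀ᵐ ω ∂P, W ω 0 = 0)
    (hmarg : ∀ t : ℝ, ∫⁻ ω, expW W ω t ∂P = 1)
    (hstat : BRStationary P W)
    (hxi : ∀ E : Set ℝ, IsCompact E → (∫⁻ ω, ⨆ t ∈ E, expW W ω t ∂P) < ⊤)
    (δ : ℝ) (hδ : 0 < δ)
    {Ω' : Type*} [MeasurableSpace Ω'] (P' : Measure Ω') [IsProbabilityMeasure P']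
    (F : Ω' → ℝ → ℝ) (C : ℝ≥0∞)
    (hM3 : M3Rep P P' W F δ C)
    (hS : ∀ᵐ ω ∂P, Ssum W δ ω < ⊤) :
    Tendsto (fun T : ℝ => picksum P W δ T / ENNReal.ofReal T) atTop (𝓝 C) ∧ 0 < C :=
  pickands_eq_m3_constant_general P W δ hδ P' F C hM3
end
end

section
/- Fix δ > 0 and suppose ξ_W^δ admits an M3 representation with shape process F_W^δ and constant C_W^δ. Then the restriction W^δ of W to δℤ can be expressed in terms of F_W^δ: for every Borel measurable set L of paths on δℤ, P(W^δ ∈ L) = C_W^δ E[ ∫_{δℤ} 1{ F_W^δ(· + t) − F_W^δ(t) ∈ L } e^{F_W^δ(t)} ν_δ(dt) ], where ν_δ is δ times the counting measure on δℤ. -/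
/-! Both sides of the identity are values of measures on path space `ℤ → ℝ`. The left side is the
exponent measure of `W^δ`, the law of `u + W^δ` under `e^{-u} du ⊗ P`, evaluated on
`{g | 0 < g 0, g - g 0 ∈ L}`; the right side is the same evaluation of `C δ ∑_m` of the exponent
measures of the shifted shapes `F(δ(· + m))`. The M3 representation says precisely that these two
measures agree on the complements of lower orthants `{g | ∃ i, x i < g (s i)}`, which have finite
mass because `E e^{W(t)} = 1`; differences of such sets form a π-system generating the product
σ-algebra, so the two measures coincide. -/

open MeasureTheory Filter Set ProbabilityTheory
open scoped ENNReal NNReal Topology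

noncomputable section

def expTilt : Measure ℝ := volume.withDensity fun u => ENNReal.ofReal (Real.exp (-u))

instance : SFinite expTilt := by unfold expTilt; infer_instance

lemma expTilt_Ioi (a : ℝ) : expTilt (Ioi a) = ENNReal.ofReal (Real.exp (-a)) := by
  rw [expTilt, withDensity_apply _ measurableSet_Ioi, ← ofReal_integral_eq_lintegral_ofReal,
    integral_exp_neg_Ioi]
  · exact (by simpa only [neg_one_mul] using exp_neg_integrableOn_Ioi a one_pos :
      IntegrableOn (fun x => Real.exp (-x)) (Ioi a))
  · exact .of_forall fun x => (Real.exp_pos _).le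

lemma expTilt_setOf_exists_lt {n : ℕ} (y x : Fin n → ℝ) :
    expTilt {u | ∃ i, x i < u + y i} = ⨆ i, ENNReal.ofReal (Real.exp (y i - x i)) := by
  rcases isEmpty_or_nonempty (Fin n) with hn | hn
  · simp
  obtain ⟨j, hj⟩ := Finite.exists_max fun i => y i - x i
  have hset : {u | ∃ i, x i < u + y i} = Ioi (x j - y j) := by
    ext u
    simp only [mem_ofPred_eq, mem_Ioi]
    exact ⟨fun ⟨i, hi⟩ => by linarith [hj i], fun hu => ⟨j, by linarith⟩⟩
  rw [hset, expTilt_Ioi, neg_sub]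
  exact le_antisymm (le_iSup (fun i => ENNReal.ofReal (Real.exp (y i - x i))) j)
    (iSup_le fun i => ENNReal.ofReal_le_ofReal (Real.exp_le_exp.2 (hj i)))

/-- The exponent measure of the max-stable process `max_i (P_i + X_i)`. -/
def exponentMeasure {Ω ι : Type*} [MeasurableSpace Ω] (P : Measure Ω) (X : Ω → ι → ℝ) :
    Measure (ι → ℝ) :=
  (expTilt.prod P).map fun p i => p.1 + X p.2 i

def exceedanceSet {ι : Type*} {n : ℕ} (s : Fin n → ι) (x : Fin n → ℝ) : Set (ι → ℝ) :=
  {g | ∃ i, x i < g (s i)}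

section exceedanceSet

variable {ι : Type*}

lemma measurableSet_exceedanceSet {n : ℕ} (s : Fin n → ι) (x : Fin n → ℝ) :
    MeasurableSet (exceedanceSet s x) := by
  rw [exceedanceSet, ofPred_exists]
  exact .iUnion fun i => measurableSet_lt measurable_const (measurable_pi_apply _)

@[simp]
lemma exceedanceSet_elim0 : exceedanceSet (ι := ι) Fin.elim0 Fin.elim0 = ∅ := by
  simp [exceedanceSet]

lemma exceedanceSet_cons {n : ℕ} (j : ι) (s : Fin n → ι) (a : ℝ) (x : Fin n → ℝ) :
    exceedanceSet (Fin.cons j s : Fin (n + 1) → ι) (Fin.cons a x) =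
      {g | a < g j} ∪ exceedanceSet s x := by
  ext g
  simp [exceedanceSet, Fin.exists_fin_succ]

lemma exceedanceSet_append {m n : ℕ} (s : Fin m → ι) (s' : Fin n → ι) (x : Fin m → ℝ)
    (x' : Fin n → ℝ) :
    exceedanceSet (Fin.append s s') (Fin.append x x') =
      exceedanceSet s x ∪ exceedanceSet s' x' := by
  ext g
  simp only [exceedanceSet, mem_ofPred_eq, mem_union]
  constructor
  · rintro ⟨i, hi⟩
    induction i using Fin.addCases with
    | left i => exact .inl ⟨i, by simpa using hi⟩
    | right i => exact .inr ⟨i, by simpa using hi⟩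
  · rintro (⟨i, hi⟩ | ⟨i, hi⟩)
    · exact ⟨Fin.castAdd n i, by simpa using hi⟩
    · exact ⟨Fin.natAdd m i, by simpa using hi⟩

def exceedanceDiffs (j : ι) : Set (Set (ι → ℝ)) :=
  {A | ∃ (a : ℝ) (n : ℕ) (s : Fin n → ι) (x : Fin n → ℝ), A = {g | a < g j} \ exceedanceSet s x}

lemma isPiSystem_exceedanceDiffs (j : ι) : IsPiSystem (exceedanceDiffs j) := by
  rintro _ ⟨a, n, s, x, rfl⟩ _ ⟨a', n', s', x', rfl⟩ -
  refine ⟨max a a', n + n', Fin.append s s', Fin.append x x', ?_⟩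
  rw [exceedanceSet_append]
  ext g
  simp only [mem_inter_iff, Set.mem_sdiff, mem_union, mem_ofPred_eq, max_lt_iff]
  tauto

lemma iUnion_halfSpace_eq_univ (j : ι) :
    ⋃ k : ℕ, {g : ι → ℝ | -(k : ℝ) < g j} = univ :=
  eq_univ_of_forall fun g => mem_iUnion.2 ((exists_nat_gt (-g j)).imp fun _ hk => by
    simp only [mem_ofPred_eq]; linarith)

lemma generateFrom_exceedanceDiffs (j : ι) :
    MeasurableSpace.generateFrom (exceedanceDiffs j) = MeasurableSpace.pi := by
  refine le_antisymm (MeasurableSpace.generateFrom_le ?_) fun A hA => ?_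
  · rintro _ ⟨a, n, s, x, rfl⟩
    exact (measurableSet_lt measurable_const (measurable_pi_apply j)).diff
      (measurableSet_exceedanceSet s x)
  · have hcoord : ∀ j', Measurable[MeasurableSpace.generateFrom (exceedanceDiffs j)]
        fun g : ι → ℝ => g j' := fun j' => measurable_of_Iic fun c => by
      have : (fun g : ι → ℝ => g j') ⁻¹' Iic c =
          ⋃ k : ℕ, {g | -(k : ℝ) < g j} \ exceedanceSet ![j'] ![c] := by
        rw [← iUnion_sdiff, iUnion_halfSpace_eq_univ]
        ext g
        simp [exceedanceSet]
      rw [this]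
      exact .iUnion fun k => MeasurableSpace.measurableSet_generateFrom ⟨_, _, _, _, rfl⟩
    exact (@measurable_pi_iff _ _ _ (MeasurableSpace.generateFrom _) _ id).2 hcoord hA

theorem Measure.ext_of_exceedanceSet [Nonempty ι] {μ ν : Measure (ι → ℝ)}
    (hfin : ∀ (n : ℕ) (s : Fin n → ι) (x : Fin n → ℝ), μ (exceedanceSet s x) ≠ ⊤)
    (heq : ∀ (n : ℕ) (s : Fin n → ι) (x : Fin n → ℝ),
      μ (exceedanceSet s x) = ν (exceedanceSet s x)) :
    μ = ν := by
  let j : ι := Classical.arbitrary ι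
  have hhalf : ∀ a : ℝ, {g : ι → ℝ | a < g j} = exceedanceSet ![j] ![a] := fun a => by
    ext g; simp [exceedanceSet]
  refine Measure.ext_of_generateFrom_of_iUnion (exceedanceDiffs j)
    (fun k : ℕ => {g | -(k : ℝ) < g j} \ exceedanceSet Fin.elim0 Fin.elim0)
    (generateFrom_exceedanceDiffs j).symm (isPiSystem_exceedanceDiffs j) ?_
    (fun k => ⟨_, _, _, _, rfl⟩) (fun k => ?_) ?_
  · simpa using iUnion_halfSpace_eq_univ j
  · simpa [hhalf] using hfin _ _ _
  · rintro _ ⟨a, n, s, x, rfl⟩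
    -- `{a < g j} \ D = ({a < g j} ∪ D) \ D`, and both `{a < g j} ∪ D` and `D` are exceedance sets
    have hD := measurableSet_exceedanceSet s x
    have hsub : exceedanceSet s x ⊆ exceedanceSet (Fin.cons j s : Fin (n + 1) → ι) (Fin.cons a x) :=
      exceedanceSet_cons j s a x ▸ subset_union_right
    rw [← union_sdiff_right, ← exceedanceSet_cons,
      measure_sdiff hsub hD.nullMeasurableSet (hfin _ _ _),
      measure_sdiff hsub hD.nullMeasurableSet (heq _ _ _ ▸ hfin _ _ _), heq, heq]

end exceedanceSet

def incrementSet {ι : Type*} (j : ι) (L : Set (ι → ℝ)) : Set (ι → ℝ) :=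
  {g | 0 < g j ∧ (fun i => g i - g j) ∈ L}

lemma measurableSet_incrementSet {ι : Type*} (j : ι) {L : Set (ι → ℝ)} (hL : MeasurableSet L) :
    MeasurableSet (incrementSet j L) :=
  (measurableSet_lt measurable_const (measurable_pi_apply j)).inter
    (hL.preimage (measurable_pi_iff.2 fun i => by fun_prop))

section exponentMeasure

variable {Ω ι : Type*} [MeasurableSpace Ω] {P : Measure Ω} [SFinite P] {X : Ω → ι → ℝ}

lemma exponentMeasure_apply (hX : Measurable X) {A : Set (ι → ℝ)} (hA : MeasurableSet A) :
    exponentMeasure P X A = ∫⁻ ω, expTilt {u | (fun i => u + X ω i) ∈ A} ∂P := by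
  have hφ : Measurable fun p : ℝ × Ω => fun i => p.1 + X p.2 i :=
    measurable_pi_iff.2 fun i => measurable_fst.add ((measurable_pi_apply i).comp
      (hX.comp measurable_snd))
  rw [exponentMeasure, Measure.map_apply hφ hA, Measure.prod_apply_symm (hφ hA)]
  rfl

lemma exponentMeasure_exceedanceSet (hX : Measurable X) {n : ℕ} (s : Fin n → ι)
    (x : Fin n → ℝ) :
    exponentMeasure P X (exceedanceSet s x) =
      ∫⁻ ω, ⨆ i, ENNReal.ofReal (Real.exp (X ω (s i) - x i)) ∂P := by
  rw [exponentMeasure_apply hX (measurableSet_exceedanceSet s x)]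
  exact lintegral_congr fun ω => expTilt_setOf_exists_lt _ x

lemma exponentMeasure_exceedanceSet_ne_top (hX : Measurable X)
    (hint : ∀ i, ∫⁻ ω, ENNReal.ofReal (Real.exp (X ω i)) ∂P ≠ ⊤) {n : ℕ} (s : Fin n → ι)
    (x : Fin n → ℝ) :
    exponentMeasure P X (exceedanceSet s x) ≠ ⊤ := by
  have hterm : ∀ i ω, ENNReal.ofReal (Real.exp (X ω (s i) - x i)) =
      ENNReal.ofReal (Real.exp (-x i)) * ENNReal.ofReal (Real.exp (X ω (s i))) := fun i ω => by
    rw [← ENNReal.ofReal_mul (Real.exp_pos _).le, ← Real.exp_add, neg_add_eq_sub]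
  rw [exponentMeasure_exceedanceSet hX, ← lt_top_iff_ne_top]
  calc ∫⁻ ω, ⨆ i, ENNReal.ofReal (Real.exp (X ω (s i) - x i)) ∂P
      ≤ ∫⁻ ω, ∑ i, ENNReal.ofReal (Real.exp (X ω (s i) - x i)) ∂P :=
        lintegral_mono fun ω => iSup_le fun i =>
          Finset.single_le_sum (f := fun i => ENNReal.ofReal (Real.exp (X ω (s i) - x i)))
            (fun _ _ => by positivity) (Finset.mem_univ i)
    _ = ∑ i, ENNReal.ofReal (Real.exp (-x i)) * ∫⁻ ω, ENNReal.ofReal (Real.exp (X ω (s i))) ∂P := by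
        simp_rw [hterm]
        rw [lintegral_finsetSum _ fun i _ => by fun_prop]
        simp_rw [lintegral_const_mul' _ _ ENNReal.ofReal_ne_top]
    _ < ⊤ := ENNReal.sum_lt_top.2 fun i _ =>
        ENNReal.mul_lt_top ENNReal.ofReal_lt_top (lt_top_iff_ne_top.2 (hint (s i)))

lemma exponentMeasure_incrementSet (hX : Measurable X) (j : ι) {L : Set (ι → ℝ)}
    (hL : MeasurableSet L) :
    exponentMeasure P X (incrementSet j L) =
      ∫⁻ ω, L.indicator (fun _ => ENNReal.ofReal (Real.exp (X ω j)))
        (fun i => X ω i - X ω j) ∂P := by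
  rw [exponentMeasure_apply hX (measurableSet_incrementSet j hL)]
  refine lintegral_congr fun ω => ?_
  simp only [incrementSet, mem_ofPred_eq, add_sub_add_left_eq_sub]
  by_cases hmem : (fun i => X ω i - X ω j) ∈ L
  · have : {u : ℝ | 0 < u + X ω j} = Ioi (-X ω j) := by
      ext u; simp only [mem_ofPred_eq, mem_Ioi]; constructor <;> intro <;> linarith
    simp [hmem, this, expTilt_Ioi]
  · simp [hmem]

lemma exponentMeasure_incrementSet_of_ae_eq_zero (hX : Measurable X) {j : ι}
    (hj : ∀ᵐ ω ∂P, X ω j = 0) {L : Set (ι → ℝ)} (hL : MeasurableSet L) :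
    exponentMeasure P X (incrementSet j L) = P (X ⁻¹' L) := by
  rw [exponentMeasure_incrementSet hX j hL, ← lintegral_indicator_one (hX hL)]
  refine lintegral_congr_ae (hj.mono fun ω hω => ?_)
  have hincr : (fun i => X ω i - X ω j) = X ω := by simp [hω]
  dsimp only
  rw [hincr, hω, Real.exp_zero, ENNReal.ofReal_one]
  rfl

lemma measurable_indicator_increments (hX : Measurable X) (j : ι) {L : Set (ι → ℝ)}
    (hL : MeasurableSet L) :
    Measurable fun ω => L.indicator (fun _ => ENNReal.ofReal (Real.exp (X ω j)))
      (fun i => X ω i - X ω j) := by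
  simp only [Set.indicator]
  exact Measurable.ite (hL.preimage (measurable_pi_iff.2 fun i => by fun_prop)) (by fun_prop)
    measurable_const

end exponentMeasure

section lattice

variable {δ : ℝ}

lemma int_mul_mem_grid (hδ : δ ≠ 0) (k : ℤ) : δ * k ∈ grid δ := by
  simp only [grid, if_neg hδ]
  exact ⟨k, rfl⟩

lemma lintegral_latticeMeasure_neg (hδ : δ ≠ 0) (f : ℝ → ℝ≥0∞) :
    ∫⁻ r, f (-r) ∂latticeMeasure δ = ENNReal.ofReal δ * ∑' m : ℤ, f (δ * m) := by
  rw [latticeMeasure, if_neg hδ, lintegral_smul_measure, lintegral_sum_measure, smul_eq_mul,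
    ← (Equiv.neg ℤ).tsum_eq]
  simp [lintegral_dirac]

theorem exponentMeasure_latticePath_eq_of_M3Rep {Ω Ω' : Type*} [MeasurableSpace Ω]
    [MeasurableSpace Ω'] {P : Measure Ω} [SFinite P] {P' : Measure Ω'} [SFinite P']
    {W : Ω → ℝ → ℝ} {F : Ω' → ℝ → ℝ} {C : ℝ≥0∞} (hW : Measurable W)
    (hint : ∀ t, ∫⁻ ω, expW W ω t ∂P ≠ ⊤) (hδ : δ ≠ 0) (hM3 : M3Rep P P' W F δ C) :
    exponentMeasure P (fun ω (n : ℤ) => W ω (δ * n)) =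
      C • ENNReal.ofReal δ •
        Measure.sum fun m : ℤ => exponentMeasure P' fun ω' (n : ℤ) => F ω' (δ * (n + m)) := by
  obtain ⟨hF, -, -, -, -, -, hfdd⟩ := hM3
  have hWδ : Measurable fun ω (n : ℤ) => W ω (δ * n) := measurable_pi_iff.2 fun n => by fun_prop
  have hFδ : ∀ m : ℤ, Measurable fun ω' (n : ℤ) => F ω' (δ * (n + m)) := fun m =>
    measurable_pi_iff.2 fun n => by fun_prop
  refine Measure.ext_of_exceedanceSet
    (fun _ => exponentMeasure_exceedanceSet_ne_top hWδ fun _ => hint _) fun n s x => ?_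
  rw [Measure.smul_apply, Measure.smul_apply, Measure.sum_apply _ (measurableSet_exceedanceSet s x),
    exponentMeasure_exceedanceSet hWδ, hfdd n _ x fun i => int_mul_mem_grid hδ (s i), smul_eq_mul,
    smul_eq_mul]
  simp_rw [exponentMeasure_exceedanceSet (hFδ _)]
  rw [← lintegral_tsum fun m => by fun_prop, ← lintegral_const_mul' _ _ ENNReal.ofReal_ne_top]
  congr 1
  refine lintegral_congr fun ω' => ?_
  simpa only [← sub_eq_add_neg, mul_add] using lintegral_latticeMeasure_neg hδ
    fun r => ⨆ i, ENNReal.ofReal (Real.exp (F ω' (δ * s i + r) - x i))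

end lattice

theorem discrete_m3_path_representation_general
    {Ω : Type*} [MeasurableSpace Ω] (P : Measure Ω) [IsProbabilityMeasure P]
    (W : Ω → ℝ → ℝ) (hWmeas : Measurable W)
    (hW0 : ∀ᵐ ω ∂P, W ω 0 = 0)
    (hmarg : ∀ t : ℝ, ∫⁻ ω, expW W ω t ∂P = 1)
    (δ : ℝ) (hδ : 0 < δ)
    {Ω' : Type*} [MeasurableSpace Ω'] (P' : Measure Ω') [IsProbabilityMeasure P']
    (F : Ω' → ℝ → ℝ) (C : ℝ≥0∞)
    (hM3 : M3Rep P P' W F δ C) :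
    ∀ L : Set (ℤ → ℝ), MeasurableSet L →
      P {ω | (fun n : ℤ => W ω (δ * n)) ∈ L}
        = C * ∫⁻ ω', ENNReal.ofReal δ *
            ∑' m : ℤ, Set.indicator L
              (fun _ => ENNReal.ofReal (Real.exp (F ω' (δ * m))))
              (fun n : ℤ => F ω' (δ * (n + m)) - F ω' (δ * m)) ∂P' := by
  intro L hL
  have hWδ : Measurable fun ω (n : ℤ) => W ω (δ * n) := measurable_pi_iff.2 fun n => by fun_prop
  have hFδ : ∀ m : ℤ, Measurable fun ω' (n : ℤ) => F ω' (δ * (n + m)) := fun m =>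
    measurable_pi_iff.2 fun n => (measurable_pi_apply _).comp hM3.1
  have hμ := congrArg (· (incrementSet 0 L)) (exponentMeasure_latticePath_eq_of_M3Rep hWmeas
    (fun t => (hmarg t).trans_ne ENNReal.one_ne_top) hδ.ne' hM3)
  simp only [Measure.smul_apply, Measure.sum_apply _ (measurableSet_incrementSet 0 hL),
    smul_eq_mul] at hμ
  rw [exponentMeasure_incrementSet_of_ae_eq_zero hWδ (by simpa using hW0) hL] at hμ
  refine hμ.trans ?_
  simp_rw [exponentMeasure_incrementSet (hFδ _) 0 hL, Int.cast_zero, zero_add]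
  rw [lintegral_const_mul' _ _ ENNReal.ofReal_ne_top, lintegral_tsum fun m => by
    simpa using (measurable_indicator_increments (hFδ m) 0 hL).aemeasurable]

/-- **Theorem 5 (Dȩbicki–Engelke–Hashorva, discrete Engelke et al. representation).**
Let `W` be such that the corresponding max-stable Brown–Resnick process `ξ_W` is stationary and
has càdlàg paths.  Fix `δ > 0` and suppose `ξ_W^δ` admits an M3 representation with shape
process `F = F_W^δ` and constant `C = C_W^δ`.  Then the restriction `W^δ` of `W` to `δℤ`
(viewed as the process `n ↦ W(δ n)`, `n ∈ ℤ`) can be expressed in terms of `F_W^δ`: for every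
Borel measurable set `L` of paths on `δℤ`,
`P(W^δ ∈ L) = C_W^δ · E[ ∫_{δℤ} 1{F_W^δ(· + t) - F_W^δ(t) ∈ L} e^{F_W^δ(t)} ν_δ(dt) ]`,
where `ν_δ` is `δ` times the counting measure on `δℤ`. -/
theorem discrete_m3_path_representation
    {Ω : Type*} [MeasurableSpace Ω] (P : Measure Ω) [IsProbabilityMeasure P]
    (W : Ω → ℝ → ℝ) (hWmeas : Measurable W)
    (hpath : ∀ ω, Cadlag (W ω))
    (hW0 : ∀ᵐ ω ∂P, W ω 0 = 0)
    (hmarg : ∀ t : ℝ, ∫⁻ ω, expW W ω t ∂P = 1)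
    (hstat : BRStationary P W)
    (hxi : ∀ E : Set ℝ, IsCompact E → (∫⁻ ω, ⨆ t ∈ E, expW W ω t ∂P) < ⊤)
    (δ : ℝ) (hδ : 0 < δ)
    {Ω' : Type*} [MeasurableSpace Ω'] (P' : Measure Ω') [IsProbabilityMeasure P']
    (F : Ω' → ℝ → ℝ) (C : ℝ≥0∞)
    (hM3 : M3Rep P P' W F δ C) :
    ∀ L : Set (ℤ → ℝ), MeasurableSet L →
      P {ω | (fun n : ℤ => W ω (δ * n)) ∈ L}
        = C * ∫⁻ ω', ENNReal.ofReal δ *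
            ∑' m : ℤ, Set.indicator L
              (fun _ => ENNReal.ofReal (Real.exp (F ω' (δ * m))))
              (fun n : ℤ => F ω' (δ * (n + m)) - F ω' (δ * m)) ∂P' :=
  discrete_m3_path_representation_general P W hWmeas hW0 hmarg δ hδ P' F C hM3
end
end

section
/- For every λ > 0 and every ε > 0 there exists J such that for all integers j ≥ J: sup_{s ∈ [j, j+1)} |σ²(s) − σ²(λ⌊s/λ⌋)| ≤ (1 − c + ε) ℓ(j + 1). -/
open Filter Set
open scoped Topology

/-!
Fix `k ∈ ℕ` with `k ≥ λ + 1`. For `s ∈ [j, j+1)` both `s` and `λ⌊s/λ⌋ ∈ (s - λ, s]` lie in the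
window `[j + 1 - k, j + 1]`, where `c ℓ(j + 1 - k) ≤ σ² ≤ ℓ(j + 1)` by monotonicity of `ℓ` and the
sandwich. Hence the error is at most `ℓ(j + 1) - c ℓ(j + 1 - k)`, and the ratio condition makes
`ℓ(j + 1 - k) ≥ (1 - ε / c) ℓ(j + 1)` for large `j`.
-/

lemma mul_floor_div_mem_Ioc {lam : ℝ} (hlam : 0 < lam) (s : ℝ) :
    lam * (⌊s / lam⌋ : ℝ) ∈ Ioc (s - lam) s := by
  constructor
  · have := Int.lt_floor_add_one (s / lam)
    rw [div_lt_iff₀ hlam] at this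
    linarith
  · have := Int.floor_le (s / lam)
    rw [le_div_iff₀ hlam] at this
    linarith

lemma eventually_one_sub_mul_le_of_tendsto_div_one {ℓ : ℝ → ℝ} {a δ : ℝ}
    (hℓ : ∀ᶠ t in atTop, 0 ≤ ℓ t) (hratio : Tendsto (fun t => ℓ t / ℓ (t + a)) atTop (𝓝 1))
    (hδ : 0 < δ) : ∀ᶠ t in atTop, (1 - δ) * ℓ (t + a) ≤ ℓ t := by
  have hshift : ∀ᶠ t in atTop, 0 ≤ ℓ (t + a) :=
    (tendsto_atTop_add_const_right _ a tendsto_id).eventually hℓ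
  filter_upwards [hℓ, hshift, hratio.eventually (eventually_gt_nhds (by linarith : 1 - δ < 1))]
    with t ht hta hlt
  rcases hta.eq_or_lt with hzero | hpos
  · simpa [← hzero] using ht
  · exact ((lt_div_iff₀ hpos).1 hlt).le

lemma abs_sub_le_of_forall_mem_Icc {ℓ σ : ℝ → ℝ} {c b e x y : ℝ} (hc : 0 ≤ c)
    (hmono : MonotoneOn ℓ (Ici b)) (hsandwich : ∀ t, b ≤ t → c * ℓ t ≤ σ t ∧ σ t ≤ ℓ t)
    (hx : x ∈ Icc b e) (hy : y ∈ Icc b e) : |σ x - σ y| ≤ ℓ e - c * ℓ b := by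
  have hb : b ∈ Ici b := self_mem_Ici
  have he : e ∈ Ici b := hx.1.trans hx.2
  have upper : ∀ z ∈ Icc b e, σ z ≤ ℓ e := fun z hz =>
    (hsandwich z hz.1).2.trans (hmono hz.1 he hz.2)
  have lower : ∀ z ∈ Icc b e, c * ℓ b ≤ σ z := fun z hz =>
    (mul_le_mul_of_nonneg_left (hmono hb hz.1 hz.1) hc).trans (hsandwich z hz.1).1
  rw [abs_sub_le_iff]
  constructor <;> linarith [upper x hx, upper y hy, lower x hx, lower y hy]

theorem discretization_error_bound_general
    (ℓ σsq : ℝ → ℝ) (c : ℝ) (hc0 : 0 < c)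
    (hℓnonneg : ∀ t : ℝ, 0 ≤ t → 0 ≤ ℓ t)
    (hℓmono : ∃ t₀ : ℝ, 0 ≤ t₀ ∧ MonotoneOn ℓ (Set.Ici t₀))
    (hℓratio : ∀ k : ℕ, Tendsto (fun t : ℝ => ℓ t / ℓ (t + (k : ℝ))) atTop (𝓝 1))
    (hsandwich : ∀ᶠ t : ℝ in atTop, c * ℓ t ≤ σsq t ∧ σsq t ≤ ℓ t) :
    ∀ lam : ℝ, 0 < lam → ∀ ε : ℝ, 0 < ε →
      ∃ J : ℕ, ∀ j : ℕ, J ≤ j →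
        ∀ s ∈ Set.Ico (j : ℝ) ((j : ℝ) + 1),
          |σsq s - σsq (lam * (⌊s / lam⌋ : ℝ))| ≤ (1 - c + ε) * ℓ ((j : ℝ) + 1) := by
  obtain ⟨t₀, -, hmono⟩ := hℓmono
  intro lam hlam ε hε
  set k : ℕ := ⌈lam⌉₊ + 1
  have hk : lam + 1 ≤ k := by push_cast [k]; linarith [Nat.le_ceil lam]
  have hwindow : ∀ᶠ b in atTop, MonotoneOn ℓ (Ici b) ∧
      (∀ t, b ≤ t → c * ℓ t ≤ σsq t ∧ σsq t ≤ ℓ t) ∧ (1 - ε / c) * ℓ (b + k) ≤ ℓ b := by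
    filter_upwards [eventually_ge_atTop t₀, eventually_forall_ge_atTop.2 hsandwich,
      eventually_one_sub_mul_le_of_tendsto_div_one (eventually_ge_atTop 0 |>.mono hℓnonneg)
        (hℓratio k) (div_pos hε hc0)] with b hb hσ hratio
    exact ⟨hmono.mono (Ici_subset_Ici.2 hb), hσ, hratio⟩
  have hstart : Tendsto (fun j : ℕ => (j : ℝ) + (1 - k)) atTop atTop :=
    tendsto_atTop_add_const_right _ _ tendsto_natCast_atTop_atTop
  obtain ⟨J, hJ⟩ := eventually_atTop.1 (hstart.eventually hwindow)
  refine ⟨J, fun j hj s hs => ?_⟩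
  obtain ⟨hmonoj, hσj, hratioj⟩ := hJ j hj
  have hend : (j : ℝ) + (1 - k) + k = j + 1 := by ring
  rw [hend] at hratioj
  obtain ⟨hu_gt, hu_le⟩ := mul_floor_div_mem_Ioc hlam s
  have hs_mem : s ∈ Icc ((j : ℝ) + (1 - k)) (j + 1) := ⟨by linarith [hs.1], hs.2.le⟩
  have hu_mem : lam * (⌊s / lam⌋ : ℝ) ∈ Icc ((j : ℝ) + (1 - k)) (j + 1) :=
    ⟨by linarith [hs.1], by linarith [hs.2]⟩
  calc |σsq s - σsq (lam * (⌊s / lam⌋ : ℝ))|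
      ≤ ℓ (j + 1) - c * ℓ ((j : ℝ) + (1 - k)) :=
        abs_sub_le_of_forall_mem_Icc hc0.le hmonoj hσj hs_mem hu_mem
    _ ≤ ℓ (j + 1) - c * ((1 - ε / c) * ℓ (j + 1)) := by gcongr
    _ = (1 - c + ε) * ℓ ((j : ℝ) + 1) := by field_simp; ring

/-- **Bound on the discretization error `κ_λ(j)` (proof of Theorem 2).**
Let `ℓ : [0,∞) → [0,∞)` be ultimately monotone non-decreasing with
`lim_{t→∞} ℓ(t)/ℓ(t+k) = 1` for every `k ∈ ℕ`, let `c ∈ (0,1]`, and let `σ²` satisfy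
`c ℓ(t) ≤ σ²(t) ≤ ℓ(t)` for all sufficiently large `t`.  Then for every `λ > 0` and every
`ε > 0` there exists `J` such that for all integers `j ≥ J`:
`sup_{s ∈ [j, j+1)} |σ²(s) - σ²(λ⌊s/λ⌋)| ≤ (1 - c + ε) ℓ(j + 1)`. -/
theorem discretization_error_bound
    (ℓ σsq : ℝ → ℝ) (c : ℝ) (hc0 : 0 < c) (hc1 : c ≤ 1)
    (hℓnonneg : ∀ t : ℝ, 0 ≤ t → 0 ≤ ℓ t)
    (hℓmono : ∃ t₀ : ℝ, 0 ≤ t₀ ∧ MonotoneOn ℓ (Set.Ici t₀))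
    (hℓratio : ∀ k : ℕ, Tendsto (fun t : ℝ => ℓ t / ℓ (t + (k : ℝ))) atTop (𝓝 1))
    (hσnonneg : ∀ t : ℝ, 0 ≤ t → 0 ≤ σsq t)
    (hsandwich : ∀ᶠ t : ℝ in atTop, c * ℓ t ≤ σsq t ∧ σsq t ≤ ℓ t) :
    ∀ lam : ℝ, 0 < lam → ∀ ε : ℝ, 0 < ε →
      ∃ J : ℕ, ∀ j : ℕ, J ≤ j →
        ∀ s ∈ Set.Ico (j : ℝ) ((j : ℝ) + 1),
          |σsq s - σsq (lam * (⌊s / lam⌋ : ℝ))| ≤ (1 - c + ε) * ℓ ((j : ℝ) + 1) :=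
  discretization_error_bound_general ℓ σsq c hc0 hℓnonneg hℓmono hℓratio hsandwich
end

section
/- Let δ, η ≥ 0 and suppose that lim_{|t|→∞} W(t) = −∞ almost surely and P(S^δ < ∞) = P(S^η < ∞) = 1. Then for every u ∈ (0,1), as T → ∞, the ratio R_{u,T}^{δ,η} = (sup_{s ∈ δℤ ∩ [−uT, (1−u)T]} e^{W(s)}) / (η ∑_{s ∈ ηℤ ∩ [−uT, (1−u)T]} e^{W(s)}) (with the sum replaced by the integral ∫_{−uT}^{(1−u)T} e^{W(s)} ds when η = 0) converges almost surely to M^δ / S^η, which lies in (0, ∞) almost surely. -/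
open MeasureTheory Filter Set ProbabilityTheory
open scoped ENNReal NNReal Topology

noncomputable section

/-- `S^η` restricted to a window `A ⊆ ℝ`: `η ∑_{t ∈ ηℤ ∩ A} e^{W(t)}` for `η > 0` and
`∫_A e^{W(t)} dt` for `η = 0`. -/
def SsumOn {Ω : Type*} (W : Ω → ℝ → ℝ) (η : ℝ) (ω : Ω) (A : Set ℝ) : ℝ≥0∞ :=
  if η = 0 then ∫⁻ t in A, expW W ω t
  else ENNReal.ofReal η * ∑' n : ℤ, A.indicator (expW W ω) (η * n)

/-! The convergence is pathwise. In `T`, the numerator and the denominator of the ratio are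
monotone and the windows `[-uT, (1-u)T]` exhaust `ℝ`, so they increase to `M^δ` and `S^η`; for the
denominator this is continuity from below of the measure `A ↦ ∫_A e^W` (Lebesgue measure, or
counting measure on `ηℤ`). The limit `M^δ / S^η` lies in `(0, ∞)` because `M^δ ≥ e^{W(0)} > 0`,
`S^η > 0` by right-continuity of the path, `S^η < ∞` by assumption, and `M^δ < ∞`: for `δ > 0` it
is dominated by `S^δ / δ`, and for `δ = 0` a locally bounded path tending to `-∞` is bounded. -/

section Boundedness

variable {X α : Type*} [TopologicalSpace X] [SemilatticeSup α] [Nonempty α]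

lemma IsCompact.bddAbove_image_of_isBoundedUnder {f : X → α} {K : Set X} (hK : IsCompact K)
    (hf : ∀ x, (𝓝 x).IsBoundedUnder (· ≤ ·) f) : BddAbove (f '' K) := by
  refine hK.induction_on (p := fun s => BddAbove (f '' s)) (by simp)
    (fun s t hst ht => ht.mono (image_mono hst))
    (fun s t hs ht => by simpa only [image_union] using hs.union ht) fun x _ => ?_
  obtain ⟨C, hC⟩ := hf x
  exact ⟨_, mem_nhdsWithin_of_mem_nhds hC, C, by rintro _ ⟨y, hy, rfl⟩; exact hy⟩

lemma bddAbove_range_of_tendsto_cocompact_atBot {f : X → α}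
    (hf : ∀ x, (𝓝 x).IsBoundedUnder (· ≤ ·) f) (hcc : Tendsto f (cocompact X) atBot) :
    BddAbove (range f) := by
  obtain ⟨c⟩ := ‹Nonempty α›
  obtain ⟨K, hK, hKc⟩ := mem_cocompact.1 (hcc.eventually_le_atBot c)
  refine ((hK.bddAbove_image_of_isBoundedUnder hf).union (bddAbove_Iic (a := c))).mono ?_
  rintro _ ⟨x, rfl⟩
  by_cases hx : x ∈ K
  · exact .inl (mem_image_of_mem f hx)
  · exact .inr (hKc hx)

end Boundedness

lemma Cadlag.isBoundedUnder_le_nhds {f : ℝ → ℝ} (hf : Cadlag f) (t : ℝ) :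
    (𝓝 t).IsBoundedUnder (· ≤ ·) f := by
  obtain ⟨l, hl⟩ := (hf t).2
  rw [← nhdsLT_sup_nhdsGE, IsBoundedUnder, map_sup]
  exact isBounded_sup hl.isBoundedUnder_le (hf t).1.tendsto.isBoundedUnder_le

lemma lintegral_pos_of_continuousWithinAt_Ici {f : ℝ → ℝ≥0∞} {t : ℝ}
    (hf : ContinuousWithinAt f (Ici t) t) (ht : f t ≠ 0) : 0 < ∫⁻ x, f x := by
  obtain ⟨c, hc0, hct⟩ := exists_between (pos_iff_ne_zero.2 ht)
  obtain ⟨b, hb, hbc⟩ := mem_nhdsGE_iff_exists_Ico_subset.1 (hf (Ioi_mem_nhds hct))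
  calc 0 < c * volume (Ico t b) := ENNReal.mul_pos hc0.ne' (by simpa using hb)
    _ = ∫⁻ x, (Ico t b).indicator (fun _ => c) x :=
      (lintegral_indicator_const measurableSet_Ico c).symm
    _ ≤ ∫⁻ x, f x := lintegral_mono (indicator_le fun x hx => (hbc hx).le)

section MonotoneLimits

variable {ι α : Type*} [Preorder ι] {A : ι → Set α}

lemma tendsto_biSup_atTop_of_monotone {β : Type*} [CompleteLattice β] [TopologicalSpace β]
    [SupConvergenceClass β] (hA : Monotone A) (f : α → β) :
    Tendsto (fun i => ⨆ x ∈ A i, f x) atTop (𝓝 (⨆ x ∈ ⋃ i, A i, f x)) := by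
  rw [iSup_iUnion]
  exact tendsto_atTop_iSup fun i j hij => biSup_mono fun x hx => hA hij hx

lemma tendsto_setLIntegral_atTop_of_monotone [IsCountablyGenerated (atTop : Filter ι)]
    [MeasurableSpace α] {μ : Measure α} [SFinite μ] (hA : Monotone A) (f : α → ℝ≥0∞) :
    Tendsto (fun i => ∫⁻ x in A i, f x ∂μ) atTop (𝓝 (∫⁻ x in ⋃ i, A i, f x ∂μ)) := by
  simp_rw [← withDensity_apply' f]
  exact tendsto_measure_iUnion_atTop hA

end MonotoneLimits

section Window

def window (u T : ℝ) : Set ℝ := Icc (-(u * T)) ((1 - u) * T)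

variable {u : ℝ}

lemma window_mono (hu : u ∈ Icc (0 : ℝ) 1) : Monotone (window u) := fun _ _ h =>
  Icc_subset_Icc (neg_le_neg (mul_le_mul_of_nonneg_left h hu.1))
    (mul_le_mul_of_nonneg_left h (sub_nonneg.2 hu.2))

lemma iUnion_window (hu : u ∈ Ioo (0 : ℝ) 1) : ⋃ T, window u T = univ := by
  refine eq_univ_of_forall fun s => mem_iUnion.2 ⟨max (|s| / u) (|s| / (1 - u)), ?_⟩
  have h1u : 0 < 1 - u := sub_pos.2 hu.2
  have hl : |s| ≤ u * max (|s| / u) (|s| / (1 - u)) :=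
    (div_le_iff₀' hu.1).1 (le_max_left _ _)
  have hr : |s| ≤ (1 - u) * max (|s| / u) (|s| / (1 - u)) :=
    (div_le_iff₀' h1u).1 (le_max_right _ _)
  exact ⟨by linarith [neg_abs_le s], by linarith [le_abs_self s]⟩

end Window

section BrownResnick

variable {Ω : Type*} {W : Ω → ℝ → ℝ} {ω : Ω} {δ η : ℝ}

lemma zero_mem_grid (δ : ℝ) : (0 : ℝ) ∈ grid δ := by
  unfold grid
  split_ifs
  · trivial
  · exact ⟨0, by simp⟩

lemma expW_ne_zero (W : Ω → ℝ → ℝ) (ω : Ω) (t : ℝ) : expW W ω t ≠ 0 := by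
  simp [expW, Real.exp_pos]

lemma Msup_ne_zero : Msup W δ ω ≠ 0 :=
  ne_bot_of_le_ne_bot (expW_ne_zero W ω 0) (le_biSup _ (zero_mem_grid δ))

lemma Msup_lt_top_of_bddAbove (h : BddAbove (range (W ω))) : Msup W δ ω < ⊤ := by
  obtain ⟨C, hC⟩ := h
  refine lt_of_le_of_lt (iSup₂_le fun t _ => ?_) (ENNReal.ofReal_lt_top (r := Real.exp C))
  exact ENNReal.ofReal_le_ofReal (Real.exp_le_exp.2 (hC (mem_range_self t)))

lemma Msup_lt_top_of_Ssum_lt_top (hδ : 0 < δ) (h : Ssum W δ ω < ⊤) : Msup W δ ω < ⊤ := by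
  rw [Ssum, if_neg hδ.ne'] at h
  refine lt_of_le_of_lt (iSup₂_le fun t ht => ?_)
    (ENNReal.lt_top_of_mul_ne_top_right h.ne (by simpa using hδ))
  rw [grid, if_neg hδ.ne'] at ht
  obtain ⟨n, rfl⟩ := ht
  exact ENNReal.le_tsum (f := fun n : ℤ => expW W ω (δ * n)) n

lemma Ssum_ne_zero (hη : 0 ≤ η) (hW : ContinuousWithinAt (W ω) (Ici 0) 0) :
    Ssum W η ω ≠ 0 := by
  unfold Ssum
  split_ifs with hη0
  · refine (lintegral_pos_of_continuousWithinAt_Ici (t := 0) ?_ (expW_ne_zero W ω 0)).ne'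
    exact (ENNReal.continuous_ofReal.comp Real.continuous_exp).continuousAt
      |>.comp_continuousWithinAt hW
  · refine mul_ne_zero (by simpa using lt_of_le_of_ne hη (Ne.symm hη0)) ?_
    exact ne_bot_of_le_ne_bot (expW_ne_zero W ω (η * (0 : ℤ)))
      (ENNReal.le_tsum (f := fun n : ℤ => expW W ω (η * n)) 0)

lemma SsumOn_univ : SsumOn W η ω univ = Ssum W η ω := by
  simp [SsumOn, Ssum]

lemma tendsto_SsumOn_atTop_of_monotone {ι : Type*} [Preorder ι]
    [IsCountablyGenerated (atTop : Filter ι)] {A : ι → Set ℝ} (hA : Monotone A) :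
    Tendsto (fun i => SsumOn W η ω (A i)) atTop (𝓝 (SsumOn W η ω (⋃ i, A i))) := by
  unfold SsumOn
  split_ifs
  · exact tendsto_setLIntegral_atTop_of_monotone hA _
  · refine ENNReal.Tendsto.const_mul ?_ (.inr ENNReal.ofReal_ne_top)
    have hcount : ∀ s : Set ℝ, ∑' n : ℤ, s.indicator (expW W ω) (η * n) =
        ∫⁻ n in (fun n : ℤ => η * n) ⁻¹' s, expW W ω (η * n) ∂Measure.count := fun s => by
      rw [← lintegral_indicator (.of_discrete), lintegral_count]
      rfl
    simp_rw [hcount, preimage_iUnion]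
    exact tendsto_setLIntegral_atTop_of_monotone (fun i j h => preimage_mono (hA h)) _

end BrownResnick

theorem ratio_converges_to_dieker_yakir_general
    {Ω : Type*} [MeasurableSpace Ω] (P : Measure Ω)
    (W : Ω → ℝ → ℝ)
    (hpath : ∀ ω, Cadlag (W ω))
    (δ η : ℝ) (hδ : 0 ≤ δ) (hη : 0 ≤ η)
    (hdecay : ∀ᵐ ω ∂P, Tendsto (fun t : ℝ => W ω t) (cocompact ℝ) atBot)
    (hSδ : ∀ᵐ ω ∂P, Ssum W δ ω < ⊤)
    (hSη : ∀ᵐ ω ∂P, Ssum W η ω < ⊤) :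
    ∀ u : ℝ, u ∈ Set.Ioo (0 : ℝ) 1 →
      ∀ᵐ ω ∂P,
        Tendsto (fun T : ℝ =>
            (⨆ s ∈ grid δ ∩ Set.Icc (-(u * T)) ((1 - u) * T), expW W ω s) /
              SsumOn W η ω (Set.Icc (-(u * T)) ((1 - u) * T)))
          atTop (𝓝 (Msup W δ ω / Ssum W η ω)) ∧
        0 < Msup W δ ω / Ssum W η ω ∧ Msup W δ ω / Ssum W η ω < ⊤ := by
  intro u hu
  filter_upwards [hdecay, hSδ, hSη] with ω hdec hSδω hSηω
  have hmono : Monotone (window u) := window_mono (Ioo_subset_Icc_self hu)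
  have hsup : Tendsto (fun T => ⨆ s ∈ grid δ ∩ window u T, expW W ω s) atTop
      (𝓝 (Msup W δ ω)) := by
    simpa only [Msup, ← inter_iUnion, iUnion_window hu, inter_univ] using
      tendsto_biSup_atTop_of_monotone (fun _ _ h => inter_subset_inter_right _ (hmono h))
        (expW W ω)
  have hsum : Tendsto (fun T => SsumOn W η ω (window u T)) atTop (𝓝 (Ssum W η ω)) := by
    simpa only [iUnion_window hu, SsumOn_univ] using tendsto_SsumOn_atTop_of_monotone hmono
  have hMtop : Msup W δ ω ≠ ⊤ := by
    rcases hδ.eq_or_lt with rfl | hδ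
    · exact (Msup_lt_top_of_bddAbove (bddAbove_range_of_tendsto_cocompact_atBot
        (hpath ω).isBoundedUnder_le_nhds hdec)).ne
    · exact (Msup_lt_top_of_Ssum_lt_top hδ hSδω).ne
  exact ⟨ENNReal.Tendsto.div hsup (.inl Msup_ne_zero) hsum (.inl hSηω.ne),
    ENNReal.div_pos Msup_ne_zero hSηω.ne,
    ENNReal.div_lt_top hMtop (Ssum_ne_zero hη (hpath ω 0).1)⟩

/-- **Almost sure convergence of the ratios `R_{u,T}^{δ,η}` (eq. (22), proof of Theorem 2).**
Let `δ, η ≥ 0` and suppose that `W(t) → -∞` a.s. as `|t| → ∞` and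
`P(S^δ < ∞) = P(S^η < ∞) = 1`.  Then for every `u ∈ (0,1)`, almost surely, as `T → ∞` the
ratio `R_{u,T}^{δ,η} = sup_{s ∈ δℤ ∩ [-uT,(1-u)T]} e^{W(s)} / (η ∑_{s ∈ ηℤ ∩ [-uT,(1-u)T]} e^{W(s)})`
(with the sum replaced by `∫_{-uT}^{(1-u)T} e^{W(s)} ds` when `η = 0`) converges to
`M^δ / S^η`, which lies in `(0, ∞)` almost surely. -/
theorem ratio_converges_to_dieker_yakir
    {Ω : Type*} [MeasurableSpace Ω] (P : Measure Ω) [IsProbabilityMeasure P]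
    (W : Ω → ℝ → ℝ) (hWmeas : Measurable W)
    (hpath : ∀ ω, Cadlag (W ω))
    (hW0 : ∀ᵐ ω ∂P, W ω 0 = 0)
    (hmarg : ∀ t : ℝ, ∫⁻ ω, expW W ω t ∂P = 1)
    (hstat : BRStationary P W)
    (δ η : ℝ) (hδ : 0 ≤ δ) (hη : 0 ≤ η)
    (hdecay : ∀ᵐ ω ∂P, Tendsto (fun t : ℝ => W ω t) (cocompact ℝ) atBot)
    (hSδ : ∀ᵐ ω ∂P, Ssum W δ ω < ⊤)
    (hSη : ∀ᵐ ω ∂P, Ssum W η ω < ⊤) :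
    ∀ u : ℝ, u ∈ Set.Ioo (0 : ℝ) 1 →
      ∀ᵐ ω ∂P,
        Tendsto (fun T : ℝ =>
            (⨆ s ∈ grid δ ∩ Set.Icc (-(u * T)) ((1 - u) * T), expW W ω s) /
              SsumOn W η ω (Set.Icc (-(u * T)) ((1 - u) * T)))
          atTop (𝓝 (Msup W δ ω / Ssum W η ω)) ∧
        0 < Msup W δ ω / Ssum W η ω ∧ Msup W δ ω / Ssum W η ω < ⊤ :=
  ratio_converges_to_dieker_yakir_general P W hpath δ η hδ hη hdecay hSδ hSη
end
end

section
/- Let X be a real-valued, non-degenerate random variable with E[|X|] < ∞ and E[e^X] < ∞, and set Φ(θ) = ln E[e^{θX}] for θ ∈ [0,1] (finite on [0,1] by convexity) and ε = (Φ(1) − E[X])/2. Then ε > 0 and there exists a unique γ ∈ (0,1) such that ln E[e^{γ(X − Φ(1) + ε)}] = 0; equivalently, the convex function θ ↦ Φ(θ) − θΦ(1) + θε vanishes at a unique point γ in (0,1). -/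
/-!
Put `f θ = Φ θ - θ (Φ 1 - ε)`. It is convex and continuous on `[0,1]` (convexity of `Φ` is
Hölder's inequality), `f 0 = 0`, and `f 1 = ε > 0` by strict Jensen. Its right derivative at `0`
is `E[X] - Φ 1 + ε = -ε < 0`, by dominated convergence for the difference quotients of `e^{θX}`.
So `f` dips below zero just right of `0`, comes back up to cross zero by the intermediate value
theorem, and by convexity it crosses only once. The first formulation is the second one after the
shift `Φ_{X+α}(γ) = Φ_X(γ) + γα`.
-/

open MeasureTheory Set Filter Topology Real ProbabilityTheory

theorem ConvexOn.existsUnique_zero_of_hasDerivWithinAt_neg {f : ℝ → ℝ} {a b f' : ℝ}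
    (hab : a < b) (hf : ConvexOn ℝ (Icc a b) f) (hcont : ContinuousOn f (Icc a b))
    (ha : f a ≤ 0) (hb : 0 < f b) (hf' : HasDerivWithinAt f f' (Ici a) a) (hf'_neg : f' < 0) :
    ∃! x, x ∈ Ioo a b ∧ f x = 0 := by
  obtain ⟨t, hslope, ht⟩ :=
    ((hf'.Ioi_of_Ici.limsup_slope_le' (lt_irrefl a) hf'_neg).and (Ioo_mem_nhdsGT hab)).exists
  have hft : f t < f a := by
    rw [slope_def_field, div_neg_iff] at hslope
    rcases hslope with ⟨-, h⟩ | ⟨h, -⟩ <;> linarith [ht.1]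
  have ha_mem : a ∈ Icc a b := left_mem_Icc.2 hab.le
  have ht_mem : t ∈ Icc a b := Ioo_subset_Icc_self ht
  -- A zero left of `t` would lie strictly below the chord from `a` to `t`.
  have lt_of_zero : ∀ x ∈ Ioo a b, f x = 0 → t < x := by
    intro x hx hfx
    by_contra! hxt
    rcases hxt.eq_or_lt with rfl | hxt
    · linarith
    have := hf.lt_left_of_right_lt ha_mem ht_mem (Ioo_subset_openSegment ⟨hx.1, hxt⟩)
      (by linarith)
    linarith
  have not_lt_of_zero : ∀ x ∈ Ioo a b, ∀ y ∈ Ioo a b, f x = 0 → f y = 0 → ¬ x < y := by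
    intro x hx y hy hfx hfy hxy
    have := hf.lt_right_of_left_lt ht_mem (Ioo_subset_Icc_self hy)
      (Ioo_subset_openSegment ⟨lt_of_zero x hx hfx, hxy⟩) (by linarith)
    linarith
  obtain ⟨x, hx, hfx⟩ := intermediate_value_Ioo ht.2.le
    (hcont.mono (Icc_subset_Icc ht.1.le le_rfl)) ⟨hft.trans_le ha, hb⟩
  have hx' : x ∈ Ioo a b := ⟨ht.1.trans hx.1, hx.2⟩
  refine ⟨x, ⟨hx', hfx⟩, fun y ⟨hy, hfy⟩ => le_antisymm ?_ ?_⟩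
  · exact not_lt.1 (not_lt_of_zero x hx' y hy hfx hfy)
  · exact not_lt.1 (not_lt_of_zero y hy x hx' hfy hfx)

lemma convexOn_exp_mul_const (x : ℝ) : ConvexOn ℝ univ (fun s : ℝ => exp (s * x)) :=
  convexOn_exp.comp_linearMap (LinearMap.mulRight ℝ x)

lemma hasDerivAt_exp_mul_const_zero (x : ℝ) : HasDerivAt (fun s => exp (s * x)) x 0 := by
  simpa using ((hasDerivAt_id (0 : ℝ)).mul_const x).exp

lemma slope_exp_mul_const_mem_Icc (x : ℝ) {t u : ℝ} (ht : 0 < t) (htu : t ≤ u) :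
    slope (fun s => exp (s * x)) 0 t ∈ Icc x (slope (fun s => exp (s * x)) 0 u) := by
  refine ⟨(convexOn_exp_mul_const x).le_slope_of_hasDerivAt (mem_univ _) (mem_univ _) ht
    (hasDerivAt_exp_mul_const_zero x),
    (convexOn_exp_mul_const x).slope_mono (mem_univ 0) ⟨mem_univ t, ht.ne'⟩
      ⟨mem_univ u, (ht.trans_le htu).ne'⟩ htu⟩

namespace ProbabilityTheory

variable {Ω : Type*} {m : MeasurableSpace Ω} {X : Ω → ℝ} {μ : Measure Ω}

lemma cgf_add_const [NeZero μ] {t : ℝ} (ht : Integrable (fun ω => exp (t * X ω)) μ) (α : ℝ) :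
    cgf (fun ω => X ω + α) μ t = cgf X μ t + t * α := by
  rw [cgf, mgf_add_const, log_mul (mgf_pos_iff.2 ht).ne' (exp_pos _).ne', log_exp, cgf]

/-- Integrate the convexity of `exp` at `aX - Φ a` and `bX - Φ b`, whose exponentials have
mean one. -/
lemma convexOn_cgf [NeZero μ] : ConvexOn ℝ (integrableExpSet X μ) (cgf X μ) := by
  refine ⟨convex_integrableExpSet, fun a ha b hb s t hs ht hst => ?_⟩
  set K := s * cgf X μ a + t * cgf X μ b
  have hc : s • a + t • b ∈ integrableExpSet X μ := convex_integrableExpSet ha hb hs ht hst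
  have pointwise : ∀ ω, exp ((s • a + t • b) * X ω) / exp K ≤
      s * (exp (a * X ω) / exp (cgf X μ a)) + t * (exp (b * X ω) / exp (cgf X μ b)) := by
    intro ω
    have key := convexOn_exp.2 (mem_univ (a * X ω - cgf X μ a))
      (mem_univ (b * X ω - cgf X μ b)) hs ht hst
    simp only [smul_eq_mul] at key
    rw [← exp_sub, ← exp_sub, ← exp_sub]
    calc exp ((s • a + t • b) * X ω - K)
        = exp (s * (a * X ω - cgf X μ a) + t * (b * X ω - cgf X μ b)) := by
          simp only [K, smul_eq_mul]; ring_nf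
      _ ≤ _ := key
  have hsa := (ha.div_const (exp (cgf X μ a))).const_mul s
  have htb := (hb.div_const (exp (cgf X μ b))).const_mul t
  have hmgf : mgf X μ (s • a + t • b) / exp K ≤ 1 := calc
    mgf X μ (s • a + t • b) / exp K = ∫ ω, exp ((s • a + t • b) * X ω) / exp K ∂μ :=
      (integral_div _ _).symm
    _ ≤ ∫ ω, s * (exp (a * X ω) / exp (cgf X μ a)) + t * (exp (b * X ω) / exp (cgf X μ b)) ∂μ :=
      integral_mono (hc.div_const _) (hsa.add htb) pointwise
    _ = s * (mgf X μ a / exp (cgf X μ a)) + t * (mgf X μ b / exp (cgf X μ b)) := by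
      rw [integral_add hsa htb, integral_const_mul, integral_const_mul, integral_div, integral_div]
      rfl
    _ = 1 := by
      rw [exp_cgf ha, exp_cgf hb, div_self (mgf_pos_iff.2 ha).ne', div_self (mgf_pos_iff.2 hb).ne',
        mul_one, mul_one, hst]
  exact (log_le_iff_le_exp (mgf_pos_iff.2 hc)).2 ((div_le_one (exp_pos _)).1 hmgf)

lemma continuousOn_mgf_Icc {a b : ℝ} (ha : a ∈ integrableExpSet X μ)
    (hb : b ∈ integrableExpSet X μ) : ContinuousOn (mgf X μ) (Icc a b) := by
  intro t _
  refine tendsto_integral_filter_of_dominated_convergence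
    (fun ω => exp (a * X ω) + exp (b * X ω)) ?_ ?_ (ha.add hb) ?_
  · filter_upwards [self_mem_nhdsWithin] with s hs
    exact (integrable_exp_mul_of_le_of_le ha hb hs.1 hs.2).aestronglyMeasurable
  · filter_upwards [self_mem_nhdsWithin] with s hs
    refine ae_of_all _ fun ω => ?_
    have hseg : s ∈ segment ℝ a b := by rwa [segment_eq_Icc (hs.1.trans hs.2)]
    rw [norm_of_nonneg (exp_pos _).le]
    exact ((convexOn_exp_mul_const (X ω)).le_on_segment (mem_univ a) (mem_univ b) hseg).trans
      (max_le_add_of_nonneg (exp_pos _).le (exp_pos _).le)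
  · exact ae_of_all _ fun ω =>
      ((continuous_exp.comp (continuous_id.mul continuous_const)).tendsto t).mono_left
        nhdsWithin_le_nhds

lemma hasDerivWithinAt_mgf_zero [IsFiniteMeasure μ] (hX : Integrable X μ) {u : ℝ} (hu : 0 < u)
    (hexp : Integrable (fun ω => exp (u * X ω)) μ) :
    HasDerivWithinAt (mgf X μ) μ[X] (Ici 0) 0 := by
  rw [← hasDerivWithinAt_Ioi_iff_Ici,
    hasDerivWithinAt_iff_tendsto_slope' (s := Ioi (0 : ℝ)) self_notMem_Ioi]
  have hint_slope : ∀ t ∈ Ioc 0 u,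
      Integrable (fun ω => slope (fun s => exp (s * X ω)) 0 t) μ := by
    intro t ht
    simp only [slope_def_field, zero_mul, exp_zero, sub_zero]
    exact ((integrable_exp_mul_of_nonneg_of_le hexp ht.1.le ht.2).sub
      (integrable_const 1)).div_const t
  have hslope : ∀ t ∈ Ioc 0 u,
      ∫ ω, slope (fun s => exp (s * X ω)) 0 t ∂μ = slope (mgf X μ) 0 t := by
    intro t ht
    simp only [slope_def_field, zero_mul, exp_zero, sub_zero, mgf_zero']
    rw [integral_div, integral_sub (integrable_exp_mul_of_nonneg_of_le hexp ht.1.le ht.2)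
      (integrable_const 1), integral_const, smul_eq_mul, mul_one]
    rfl
  have hIoc : Ioc 0 u ∈ 𝓝[>] (0 : ℝ) := Ioc_mem_nhdsGT hu
  refine (tendsto_integral_filter_of_dominated_convergence
    (F := fun t ω => slope (fun s => exp (s * X ω)) 0 t)
    (fun ω => |X ω| + |slope (fun s => exp (s * X ω)) 0 u|) ?_ ?_
    (hX.abs.add (hint_slope u ⟨hu, le_rfl⟩).abs) ?_).congr' ?_
  · filter_upwards [hIoc] with t ht using (hint_slope t ht).aestronglyMeasurable
  · filter_upwards [hIoc] with t ht
    refine ae_of_all _ fun ω => ?_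
    obtain ⟨hlow, hupp⟩ := slope_exp_mul_const_mem_Icc (X ω) ht.1 ht.2
    exact (abs_le_max_abs_abs hlow hupp).trans
      (max_le_add_of_nonneg (abs_nonneg _) (abs_nonneg _))
  · exact ae_of_all _ fun ω =>
      (hasDerivAt_iff_tendsto_slope.1 (hasDerivAt_exp_mul_const_zero (X ω))).mono_left
        (nhdsWithin_mono _ fun _ h => ne_of_gt h)
  · filter_upwards [hIoc] with t ht using hslope t ht

lemma hasDerivWithinAt_cgf_zero [IsProbabilityMeasure μ] (hX : Integrable X μ) {u : ℝ}
    (hu : 0 < u) (hexp : Integrable (fun ω => exp (u * X ω)) μ) :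
    HasDerivWithinAt (cgf X μ) μ[X] (Ici 0) 0 := by
  show HasDerivWithinAt (fun t => log (mgf X μ t)) _ _ _
  simpa using (hasDerivWithinAt_mgf_zero hX hu hexp).log (by simp)

lemma integral_lt_cgf_one [IsProbabilityMeasure μ] (hX : Integrable X μ)
    (hexp : Integrable (fun ω => exp (X ω)) μ) (hX_nonconst : ¬ ∃ a, ∀ᵐ ω ∂μ, X ω = a) :
    μ[X] < cgf X μ 1 := by
  rcases strictConvexOn_exp.ae_eq_const_or_map_average_lt continuousOn_exp isClosed_univ
    (ae_of_all _ fun _ => mem_univ _) hX hexp with h | h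
  · exact absurd ⟨_, h⟩ hX_nonconst
  · rw [average_eq_integral, average_eq_integral] at h
    rw [cgf, lt_log_iff_exp_lt (mgf_pos (by simpa using hexp))]
    simpa [mgf] using h

end ProbabilityTheory

theorem exists_unique_tilting_exponent_general
    {Ω : Type*} [MeasurableSpace Ω] (P : Measure Ω) [IsProbabilityMeasure P]
    (X : Ω → ℝ)
    (hnondeg : ¬ ∃ a : ℝ, ∀ᵐ ω ∂P, X ω = a)
    (hint : Integrable X P)
    (hexp : Integrable (fun ω => Real.exp (X ω)) P)
    (Φ : ℝ → ℝ) (hΦ : ∀ θ : ℝ, Φ θ = Real.log (∫ ω, Real.exp (θ * X ω) ∂P))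
    (ε : ℝ) (hε : ε = (Φ 1 - ∫ ω, X ω ∂P) / 2) :
    0 < ε ∧
    (∃! γ : ℝ, γ ∈ Set.Ioo (0 : ℝ) 1 ∧
      Real.log (∫ ω, Real.exp (γ * (X ω - Φ 1 + ε)) ∂P) = 0) ∧
    (∃! γ : ℝ, γ ∈ Set.Ioo (0 : ℝ) 1 ∧ Φ γ - γ * Φ 1 + γ * ε = 0) := by
  obtain rfl : Φ = cgf X P := funext hΦ
  have hexp1 : 1 ∈ integrableExpSet X P := by simpa [integrableExpSet] using hexp
  have hexp01 : Icc 0 1 ⊆ integrableExpSet X P := fun θ hθ =>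
    integrable_exp_mul_of_nonneg_of_le hexp1 hθ.1 hθ.2
  have hε_pos : 0 < ε := by linarith [integral_lt_cgf_one hint hexp hnondeg]
  set f : ℝ → ℝ := fun θ => cgf X P θ - θ * (cgf X P 1 - ε)
  have hzero : ∃! γ, γ ∈ Ioo 0 1 ∧ f γ = 0 := by
    refine ConvexOn.existsUnique_zero_of_hasDerivWithinAt_neg one_pos ?_ ?_ ?_ ?_
      ((hasDerivWithinAt_cgf_zero hint one_pos hexp1).sub
        ((hasDerivWithinAt_id 0 _).mul_const _)) ?_
    · exact (convexOn_cgf.subset hexp01 (convex_Icc 0 1)).sub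
        ((LinearMap.mulRight ℝ (cgf X P 1 - ε)).concaveOn (convex_Icc 0 1))
    · exact ((continuousOn_mgf_Icc (hexp01 ⟨le_rfl, zero_le_one⟩) hexp1).log
        fun θ hθ => (mgf_pos (hexp01 hθ)).ne').sub (by fun_prop)
    · simp [f]
    · simpa [f] using hε_pos
    · linarith
  refine ⟨hε_pos, (existsUnique_congr fun γ => and_congr_right fun hγ => ?_).2 hzero,
    (existsUnique_congr fun γ => and_congr_right fun _ => ?_).2 hzero⟩
  · have hshift : (fun ω => X ω - cgf X P 1 + ε) = fun ω => X ω + -(cgf X P 1 - ε) := by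
      funext ω; ring
    change cgf (fun ω => X ω - cgf X P 1 + ε) P γ = 0 ↔ f γ = 0
    rw [hshift, cgf_add_const (hexp01 (Ioo_subset_Icc_self hγ))]
    simp only [f, mul_neg, ← sub_eq_add_neg]
  · simp only [f]
    constructor <;> intro h <;> linarith

/-- **Existence of the tilting exponent `γ` (proof of Theorem 3).**
Let `X` be a real-valued, non-degenerate random variable with `E|X| < ∞` and `E e^X < ∞`, and
set `Φ(θ) = ln E[e^{θX}]` (finite on `[0,1]` by convexity) and `ε = (Φ(1) - E X)/2`.  Then
`ε > 0` and there exists a unique `γ ∈ (0,1)` such that `ln E[e^{γ(X - Φ(1) + ε)}] = 0`;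
equivalently, the convex function `θ ↦ Φ(θ) - θΦ(1) + θε` vanishes at a unique point `γ`
in `(0,1)`. -/
theorem exists_unique_tilting_exponent
    {Ω : Type*} [MeasurableSpace Ω] (P : Measure Ω) [IsProbabilityMeasure P]
    (X : Ω → ℝ) (hXmeas : Measurable X)
    (hnondeg : ¬ ∃ a : ℝ, ∀ᵐ ω ∂P, X ω = a)
    (hint : Integrable X P)
    (hexp : Integrable (fun ω => Real.exp (X ω)) P)
    (Φ : ℝ → ℝ) (hΦ : ∀ θ : ℝ, Φ θ = Real.log (∫ ω, Real.exp (θ * X ω) ∂P))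
    (ε : ℝ) (hε : ε = (Φ 1 - ∫ ω, X ω ∂P) / 2) :
    0 < ε ∧
    (∃! γ : ℝ, γ ∈ Set.Ioo (0 : ℝ) 1 ∧
      Real.log (∫ ω, Real.exp (γ * (X ω - Φ 1 + ε)) ∂P) = 0) ∧
    (∃! γ : ℝ, γ ∈ Set.Ioo (0 : ℝ) 1 ∧ Φ γ - γ * Φ 1 + γ * ε = 0) :=
  exists_unique_tilting_exponent_general P X hnondeg hint hexp Φ hΦ ε hε
end
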